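/- arXiv:2403.11744 — 9 statements merged into one kernel-verified Lean document; each statement's English description precedes it below -/
import Mathlib

section
/- Let N ≥ 2 and let C be an N×N real matrix with nonnegative entries satisfying C = Cᵀ. Let P₀ and P₁ be symmetric irreducible row-stochastic N×N matrices, let t ∈ [0,1], and set P_t = (1−t)·P₀ + t·P₁. Assume P_t is irreducible, and let M₀, M₁ and M_t be the mean first passage time matrices of P₀, P₁ and P_t respectively. Then Σ_{i,j} C_{ij}·(M_t)_{ij} ≤ (1−t)·Σ_{i,j} C_{ij}·(M₀)_{ij} + t·Σ_{i,j} C_{ij}·(M₁)_{ij}; that is, the weighted sum of mean first passage times S(P,C) = Σ_{i,j} C_{ij} M_{ij} is a convex function of P on the set of symmetric irreducible row-stochastic matrices. -/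
open Matrix Finset

/-- An N×N real matrix is row-stochastic: nonnegative entries, each row sums to 1. -/
def IsRowStochastic {N : ℕ} (P : Matrix (Fin N) (Fin N) ℝ) : Prop :=
  (∀ i j, 0 ≤ P i j) ∧ ∀ i, ∑ j, P i j = 1

/-- Irreducibility: for all i, j there is k ≥ 1 with (P^k)_{ij} > 0. -/
def IsIrreducibleMC {N : ℕ} (P : Matrix (Fin N) (Fin N) ℝ) : Prop :=
  ∀ i j, ∃ k : ℕ, 1 ≤ k ∧ 0 < (P ^ k) i j

/-- M is a mean first passage time matrix of P. -/
def IsMFPT {N : ℕ} (P M : Matrix (Fin N) (Fin N) ℝ) : Prop :=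
  ∀ i j, M i j = 1 + ∑ k ∈ Finset.univ.filter (fun k => k ≠ j), P i k * M k j

noncomputable def Jmat (N : ℕ) : Matrix (Fin N) (Fin N) ℝ := Matrix.of fun _ _ => 1

noncomputable def Amat {N : ℕ} (P : Matrix (Fin N) (Fin N) ℝ) : Matrix (Fin N) (Fin N) ℝ :=
  1 - P + ((N : ℝ)⁻¹) • Jmat N

lemma col_sum {N : ℕ} {P : Matrix (Fin N) (Fin N) ℝ} (hP : IsRowStochastic P)
    (hsym : P = Pᵀ) (j : Fin N) : ∑ i, P i j = 1 := by
  have h : ∀ i, P i j = P j i := fun i => by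
    conv_lhs => rw [hsym, Matrix.transpose_apply]
  simp_rw [h]; exact hP.2 j

lemma quad_eq {N : ℕ} {P : Matrix (Fin N) (Fin N) ℝ} (hP : IsRowStochastic P)
    (hsym : P = Pᵀ) (y : Fin N → ℝ) :
    y ⬝ᵥ (Amat P).mulVec y =
      (∑ i, ∑ j, P i j * (y i - y j)^2) / 2 + (N : ℝ)⁻¹ * (∑ i, y i)^2 := by
  have e1 : y ⬝ᵥ (1 : Matrix (Fin N) (Fin N) ℝ).mulVec y = ∑ i, y i ^ 2 := by
    rw [Matrix.one_mulVec]; simp [dotProduct, sq]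
  have e2 : y ⬝ᵥ P.mulVec y = ∑ i, ∑ j, y i * (P i j * y j) := by
    simp [dotProduct, mulVec, Finset.mul_sum]
  have e3 : y ⬝ᵥ (Jmat N).mulVec y = (∑ i, y i)^2 := by
    simp only [Jmat, dotProduct, mulVec, Matrix.of_apply, one_mul, sq]
    rw [Finset.sum_mul]
  have hq : y ⬝ᵥ (Amat P).mulVec y
      = ∑ i, y i ^ 2 - (∑ i, ∑ j, y i * (P i j * y j)) + (N:ℝ)⁻¹ * (∑ i, y i)^2 := by
    rw [Amat, add_mulVec, sub_mulVec, smul_mulVec, dotProduct_add, dotProduct_sub,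
      dotProduct_smul, e1, e2, e3, smul_eq_mul]
  have h1 : ∑ i, ∑ j, P i j * (y i - y j)^2
      = ∑ i, ∑ j, P i j * y i ^ 2 + ∑ i, ∑ j, P i j * y j ^ 2
        - 2 * ∑ i, ∑ j, y i * (P i j * y j) := by
    simp only [Finset.mul_sum]
    rw [← Finset.sum_add_distrib, ← Finset.sum_sub_distrib]
    refine Finset.sum_congr rfl fun i _ => ?_
    rw [← Finset.sum_add_distrib, ← Finset.sum_sub_distrib]
    refine Finset.sum_congr rfl fun j _ => by ring
  have hrow : ∑ i, ∑ j, P i j * y i ^ 2 = ∑ i, y i ^ 2 := by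
    refine Finset.sum_congr rfl fun i _ => ?_
    rw [← Finset.sum_mul, hP.2 i, one_mul]
  have hcol : ∑ i, ∑ j, P i j * y j ^ 2 = ∑ j, y j ^ 2 := by
    rw [Finset.sum_comm]
    refine Finset.sum_congr rfl fun j _ => ?_
    rw [← Finset.sum_mul, col_sum hP hsym, one_mul]
  rw [hq, h1, hrow, hcol]; ring

lemma quad_nonneg {N : ℕ} {P : Matrix (Fin N) (Fin N) ℝ} (hP : IsRowStochastic P)
    (hsym : P = Pᵀ) (y : Fin N → ℝ) : 0 ≤ y ⬝ᵥ (Amat P).mulVec y := by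
  rw [quad_eq hP hsym y]
  have h1 : (0:ℝ) ≤ ∑ i, ∑ j, P i j * (y i - y j)^2 :=
    Finset.sum_nonneg fun i _ => Finset.sum_nonneg fun j _ =>
      mul_nonneg (hP.1 i j) (sq_nonneg _)
  have h2 : (0:ℝ) ≤ (N : ℝ)⁻¹ := by positivity
  positivity

lemma pow_entry_nonneg {N : ℕ} {P : Matrix (Fin N) (Fin N) ℝ} (hP : ∀ i j, 0 ≤ P i j) :
    ∀ k i j, 0 ≤ (P ^ k) i j := by
  intro k
  induction k with
  | zero => intro i j; simp [Matrix.one_apply]; split <;> norm_num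
  | succ n ih =>
    intro i j
    rw [pow_succ, Matrix.mul_apply]
    exact Finset.sum_nonneg fun l _ => mul_nonneg (ih i l) (hP l j)

lemma amat_isUnit {N : ℕ} (hN : 2 ≤ N) {P : Matrix (Fin N) (Fin N) ℝ}
    (hP : IsRowStochastic P) (hsym : P = Pᵀ) (hirr : IsIrreducibleMC P) :
    IsUnit (Amat P) := by
  have hker : ∀ y : Fin N → ℝ, (Amat P).mulVec y = 0 → y = 0 := by
    intro y hy
    have hq0 : y ⬝ᵥ (Amat P).mulVec y = 0 := by rw [hy]; simp [dotProduct]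
    rw [quad_eq hP hsym y] at hq0
    have h1 : (0:ℝ) ≤ ∑ i, ∑ j, P i j * (y i - y j)^2 :=
      Finset.sum_nonneg fun i _ => Finset.sum_nonneg fun j _ =>
        mul_nonneg (hP.1 i j) (sq_nonneg _)
    have hNpos : (0:ℝ) < (N:ℝ)⁻¹ := by
      have h0 : (0:ℝ) < (N:ℝ) := by exact_mod_cast (by omega : 0 < N)
      exact inv_pos.mpr h0
    have h2 : (0:ℝ) ≤ (N:ℝ)⁻¹ * (∑ i, y i)^2 := by positivity
    have hS : ∑ i, ∑ j, P i j * (y i - y j)^2 = 0 := by nlinarith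
    have hsum0 : ∑ i, y i = 0 := by
      have h3 : (N:ℝ)⁻¹ * (∑ i, y i)^2 = 0 := by nlinarith
      have h4 : (∑ i, y i)^2 = 0 := by
        rcases mul_eq_zero.mp h3 with h | h
        · exact absurd h (ne_of_gt hNpos)
        · exact h
      exact pow_eq_zero_iff (by norm_num) |>.mp h4
    have hterm : ∀ i j, P i j * (y i - y j)^2 = 0 := by
      intro i j
      have hi := (Finset.sum_eq_zero_iff_of_nonneg (fun i _ =>
        Finset.sum_nonneg fun j _ => mul_nonneg (hP.1 i j) (sq_nonneg _))).mp hS i (Finset.mem_univ i)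
      exact (Finset.sum_eq_zero_iff_of_nonneg (fun j _ =>
        mul_nonneg (hP.1 i j) (sq_nonneg _))).mp hi j (Finset.mem_univ j)
    have hconst : ∀ i j, 0 < P i j → y i = y j := by
      intro i j hpos
      rcases mul_eq_zero.mp (hterm i j) with h | h
      · exact absurd h (ne_of_gt hpos)
      · have := pow_eq_zero_iff (n := 2) (by norm_num) |>.mp h
        linarith [sub_eq_zero.mp this]
    have hpow : ∀ k (i j : Fin N), 0 < (P ^ k) i j → y i = y j := by
      intro k
      induction k with
      | zero =>
        intro i j h
        simp only [pow_zero, Matrix.one_apply] at h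
        by_cases hij : i = j
        · rw [hij]
        · simp [hij] at h
      | succ n ih =>
        intro i j h
        rw [pow_succ, Matrix.mul_apply] at h
        have : ∃ l, 0 < (P ^ n) i l * P l j := by
          by_contra hc
          push_neg at hc
          have : ∑ l, (P ^ n) i l * P l j ≤ 0 := Finset.sum_nonpos fun l _ => hc l
          linarith
        obtain ⟨l, hl⟩ := this
        have hnl : 0 < (P ^ n) i l := by
          rcases lt_or_ge 0 ((P ^ n) i l) with h' | h'
          · exact h'
          · exfalso
            have := mul_nonpos_of_nonpos_of_nonneg h' (hP.1 l j)
            linarith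
        have hlj : 0 < P l j := by
          by_contra h'
          push_neg at h'
          have := mul_nonpos_of_nonneg_of_nonpos (le_of_lt hnl) h'
          linarith
        exact (ih i l hnl).trans (hconst l j hlj)
    have hcc : ∀ i j, y i = y j := by
      intro i j
      obtain ⟨k, _, hk⟩ := hirr i j
      exact hpow k i j hk
    funext i
    have : ∑ j, y j = (N:ℝ) * y i := by
      rw [Finset.sum_congr rfl fun j _ => hcc j i, Finset.sum_const, Finset.card_univ,
        Fintype.card_fin, nsmul_eq_mul]
    have hN0 : (N:ℝ) ≠ 0 := by
      have : 0 < N := by omega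
      positivity
    have : (N:ℝ) * y i = 0 := by rw [← this, hsum0]
    simpa [hN0] using this
  rw [← Matrix.mulVec_injective_iff_isUnit]
  intro u v huv
  have : (Amat P).mulVec (u - v) = 0 := by
    rw [Matrix.mulVec_sub, huv, sub_self]
  have := hker _ this
  exact sub_eq_zero.mp this

lemma mfpt_full {N : ℕ} {P M : Matrix (Fin N) (Fin N) ℝ} (hM : IsMFPT P M) :
    ∀ i j, M i j = 1 + (∑ k, P i k * M k j) - P i j * M j j := by
  intro i j
  have h := hM i j
  rw [Finset.filter_ne', Finset.sum_erase_eq_sub (Finset.mem_univ j)] at h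
  rw [h]; ring

lemma mfpt_diag {N : ℕ} {P M : Matrix (Fin N) (Fin N) ℝ} (hP : IsRowStochastic P)
    (hsym : P = Pᵀ) (hM : IsMFPT P M) (j : Fin N) : M j j = (N : ℝ) := by
  have hs : ∑ i, M i j = ∑ i, (1 + (∑ k, P i k * M k j) - P i j * M j j) :=
    Finset.sum_congr rfl fun i _ => mfpt_full hM i j
  rw [Finset.sum_sub_distrib, Finset.sum_add_distrib, Finset.sum_const, Finset.card_univ,
    Fintype.card_fin, nsmul_eq_mul, mul_one] at hs
  have hswap : ∑ i, ∑ k, P i k * M k j = ∑ i, M i j := by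
    rw [Finset.sum_comm]
    refine Finset.sum_congr rfl fun k _ => ?_
    rw [← Finset.sum_mul, col_sum hP hsym k, one_mul]
  have hb : ∑ i, P i j * M j j = M j j := by
    rw [← Finset.sum_mul, col_sum hP hsym j, one_mul]
  rw [hswap, hb] at hs
  linarith

lemma amat_mul_J {N : ℕ} (hN : 2 ≤ N) {P : Matrix (Fin N) (Fin N) ℝ}
    (hP : IsRowStochastic P) : Amat P * Jmat N = Jmat N := by
  have hN0 : (N : ℝ) ≠ 0 := by
    have : 0 < N := by omega
    positivity
  ext i j
  rw [Matrix.mul_apply]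
  simp only [Amat, Jmat, Matrix.add_apply, Matrix.sub_apply, Matrix.smul_apply,
    Matrix.one_apply, Matrix.of_apply, smul_eq_mul, mul_one]
  rw [Finset.sum_add_distrib, Finset.sum_sub_distrib, Finset.sum_ite_eq, hP.2 i,
    Finset.sum_const, Finset.card_univ, Fintype.card_fin, nsmul_eq_mul]
  simp [hN0]

lemma amat_mul_M {N : ℕ} {P M : Matrix (Fin N) (Fin N) ℝ} (hP : IsRowStochastic P)
    (hsym : P = Pᵀ) (hM : IsMFPT P M) :
    Amat P * M = Jmat N - (N:ℝ) • P + (N:ℝ)⁻¹ • (Jmat N * M) := by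
  ext i j
  rw [Matrix.mul_apply]
  simp only [Amat, Jmat, Matrix.add_apply, Matrix.sub_apply, Matrix.smul_apply,
    Matrix.one_apply, Matrix.of_apply, smul_eq_mul, Matrix.mul_apply, one_mul, mul_one]
  have hterm : ∀ k, ((if i = k then (1:ℝ) else 0) - P i k + (N:ℝ)⁻¹) * M k j
      = (if i = k then M k j else 0) - P i k * M k j + (N:ℝ)⁻¹ * M k j := by
    intro k; split_ifs <;> ring
  rw [Finset.sum_congr rfl fun k _ => hterm k, Finset.sum_add_distrib,
    Finset.sum_sub_distrib, Finset.sum_ite_eq, if_pos (Finset.mem_univ i),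
    ← Finset.mul_sum]
  have hf := mfpt_full hM i j
  rw [mfpt_diag hP hsym hM j] at hf
  linarith [hf]

lemma mfpt_formula {N : ℕ} (hN : 2 ≤ N) {P M : Matrix (Fin N) (Fin N) ℝ}
    (hP : IsRowStochastic P) (hsym : P = Pᵀ) (hU : IsUnit (Amat P)) (hM : IsMFPT P M) :
    ∀ i j, M i j = (N:ℝ) * (if i = j then 1 else 0)
      + (N:ℝ) * ((Amat P)⁻¹ j j - (Amat P)⁻¹ i j) := by
  set A := Amat P with hA
  set Z := A⁻¹ with hZ
  have hdet : IsUnit A.det := A.isUnit_iff_isUnit_det.mp hU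
  have hZA : Z * A = 1 := Matrix.nonsing_inv_mul A hdet
  have hZJ : Z * Jmat N = Jmat N := by
    calc Z * Jmat N = Z * (A * Jmat N) := by rw [amat_mul_J hN hP]
    _ = (Z * A) * Jmat N := by rw [Matrix.mul_assoc]
    _ = Jmat N := by rw [hZA, Matrix.one_mul]
  have hZP : Z * P = Z - 1 + (N:ℝ)⁻¹ • Jmat N := by
    have hP' : P = 1 - A + (N:ℝ)⁻¹ • Jmat N := by
      rw [hA, Amat]; ext i j
      simp only [Matrix.add_apply, Matrix.sub_apply, Matrix.smul_apply, smul_eq_mul]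
      ring
    calc Z * P = Z * (1 - A + (N:ℝ)⁻¹ • Jmat N) := by rw [← hP']
    _ = Z * 1 - Z * A + (N:ℝ)⁻¹ • (Z * Jmat N) := by
        rw [Matrix.mul_add, Matrix.mul_sub, Matrix.mul_smul]
    _ = Z - 1 + (N:ℝ)⁻¹ • Jmat N := by rw [Matrix.mul_one, hZA, hZJ]
  have key : M = Jmat N - (N:ℝ) • (Z * P) + (N:ℝ)⁻¹ • (Jmat N * M) := by
    calc M = (Z * A) * M := by rw [hZA, Matrix.one_mul]
    _ = Z * (A * M) := by rw [Matrix.mul_assoc]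
    _ = Z * (Jmat N - (N:ℝ) • P + (N:ℝ)⁻¹ • (Jmat N * M)) := by
        rw [amat_mul_M hP hsym hM]
    _ = Z * Jmat N - (N:ℝ) • (Z * P) + (N:ℝ)⁻¹ • (Z * (Jmat N * M)) := by
        rw [Matrix.mul_add, Matrix.mul_sub, Matrix.mul_smul, Matrix.mul_smul]
    _ = Jmat N - (N:ℝ) • (Z * P) + (N:ℝ)⁻¹ • (Jmat N * M) := by
        rw [hZJ, ← Matrix.mul_assoc, hZJ]
  rw [hZP] at key
  have hent : ∀ i j, M i j = 1 - (N:ℝ) * (Z i j - (if i = j then 1 else 0) + (N:ℝ)⁻¹)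
      + (N:ℝ)⁻¹ * (∑ k, M k j) := by
    intro i j
    have h := congrArg (fun X : Matrix (Fin N) (Fin N) ℝ => X i j) key
    simp only [Jmat, Matrix.add_apply, Matrix.sub_apply, Matrix.smul_apply, Matrix.mul_apply,
      Matrix.one_apply, Matrix.of_apply, smul_eq_mul, one_mul, mul_one] at h
    split_ifs at h ⊢ <;> linarith [h]
  intro i j
  have h1 := hent i j
  have h2 := hent j j
  rw [mfpt_diag hP hsym hM j] at h2
  simp only [eq_self_iff_true, if_true] at h2
  by_cases hij : i = j
  · subst hij
    rw [mfpt_diag hP hsym hM i]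
    simp
  · simp only [if_neg hij] at h1 ⊢
    linarith

lemma psd_inv_bound {N : ℕ} {B : Matrix (Fin N) (Fin N) ℝ} (hsym : B = Bᵀ)
    (hpsd : ∀ w, 0 ≤ w ⬝ᵥ B.mulVec w) (hU : IsUnit B) (x y : Fin N → ℝ) :
    2 * (x ⬝ᵥ y) - y ⬝ᵥ B.mulVec y ≤ x ⬝ᵥ B⁻¹.mulVec x := by
  have hdet : IsUnit B.det := B.isUnit_iff_isUnit_det.mp hU
  have hBB : B * B⁻¹ = 1 := Matrix.mul_nonsing_inv B hdet
  set z := B⁻¹.mulVec x with hz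
  have hBz : B.mulVec z = x := by
    rw [hz, Matrix.mulVec_mulVec, hBB, Matrix.one_mulVec]
  have h0 := hpsd (y - z)
  have hexp : (y - z) ⬝ᵥ B.mulVec (y - z)
      = y ⬝ᵥ B.mulVec y - y ⬝ᵥ x - z ⬝ᵥ B.mulVec y + z ⬝ᵥ x := by
    rw [Matrix.mulVec_sub, dotProduct_sub, sub_dotProduct, sub_dotProduct, hBz]
    ring
  have hsymswap : z ⬝ᵥ B.mulVec y = x ⬝ᵥ y := by
    rw [dotProduct_mulVec, ← Matrix.mulVec_transpose, ← hsym, hBz]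
  have hc1 : y ⬝ᵥ x = x ⬝ᵥ y := dotProduct_comm y x
  have hc2 : z ⬝ᵥ x = x ⬝ᵥ z := dotProduct_comm z x
  rw [hexp, hsymswap, hc1, hc2] at h0
  rw [← hz] at *
  linarith

lemma inv_quad_convex {N : ℕ} {A0 A1 : Matrix (Fin N) (Fin N) ℝ} (t : ℝ)
    (ht0 : 0 ≤ t) (ht1 : t ≤ 1)
    (h0sym : A0 = A0ᵀ) (h1sym : A1 = A1ᵀ)
    (h0psd : ∀ w, 0 ≤ w ⬝ᵥ A0.mulVec w) (h1psd : ∀ w, 0 ≤ w ⬝ᵥ A1.mulVec w)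
    (h0U : IsUnit A0) (h1U : IsUnit A1) (htU : IsUnit ((1 - t) • A0 + t • A1))
    (x : Fin N → ℝ) :
    x ⬝ᵥ ((1 - t) • A0 + t • A1)⁻¹.mulVec x
      ≤ (1 - t) * (x ⬝ᵥ A0⁻¹.mulVec x) + t * (x ⬝ᵥ A1⁻¹.mulVec x) := by
  set At := (1 - t) • A0 + t • A1 with hAt
  have hdet : IsUnit At.det := At.isUnit_iff_isUnit_det.mp htU
  set y := At⁻¹.mulVec x with hy
  have hAty : At.mulVec y = x := by
    rw [hy, Matrix.mulVec_mulVec, Matrix.mul_nonsing_inv At hdet, Matrix.one_mulVec]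
  have hxy : x ⬝ᵥ At⁻¹.mulVec x = x ⬝ᵥ y := rfl
  have hsplit : y ⬝ᵥ At.mulVec y = (1 - t) * (y ⬝ᵥ A0.mulVec y) + t * (y ⬝ᵥ A1.mulVec y) := by
    rw [hAt, Matrix.add_mulVec, Matrix.smul_mulVec, Matrix.smul_mulVec,
      dotProduct_add, dotProduct_smul, dotProduct_smul, smul_eq_mul, smul_eq_mul]
  have hyx : y ⬝ᵥ At.mulVec y = y ⬝ᵥ x := by rw [hAty]
  have hb0 := psd_inv_bound h0sym h0psd h0U x y
  have hb1 := psd_inv_bound h1sym h1psd h1U x y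
  have hcomm : y ⬝ᵥ x = x ⬝ᵥ y := dotProduct_comm y x
  have hkey : x ⬝ᵥ y = (1 - t) * (2 * (x ⬝ᵥ y) - y ⬝ᵥ A0.mulVec y)
      + t * (2 * (x ⬝ᵥ y) - y ⬝ᵥ A1.mulVec y) := by
    have h := hsplit
    rw [hyx, hcomm] at h
    ring_nf
    ring_nf at h
    linarith
  rw [hxy, hkey]
  have g0 : (1 - t) * (2 * (x ⬝ᵥ y) - y ⬝ᵥ A0.mulVec y) ≤ (1 - t) * (x ⬝ᵥ A0⁻¹.mulVec x) :=
    mul_le_mul_of_nonneg_left hb0 (by linarith)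
  have g1 : t * (2 * (x ⬝ᵥ y) - y ⬝ᵥ A1.mulVec y) ≤ t * (x ⬝ᵥ A1⁻¹.mulVec x) :=
    mul_le_mul_of_nonneg_left hb1 ht0
  linarith

lemma qf_entry {N : ℕ} (Z : Matrix (Fin N) (Fin N) ℝ) (i j : Fin N) :
    (fun k => (if k = i then (1:ℝ) else 0) - (if k = j then 1 else 0)) ⬝ᵥ
      Z.mulVec (fun k => (if k = i then (1:ℝ) else 0) - (if k = j then 1 else 0))
    = Z i i + Z j j - Z i j - Z j i := by
  have hmv : ∀ k, Z.mulVec (fun k => (if k = i then (1:ℝ) else 0) - (if k = j then 1 else 0)) k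
      = Z k i - Z k j := by
    intro k
    simp [mulVec, dotProduct, mul_sub, Finset.sum_sub_distrib, mul_ite, mul_one, mul_zero]
  simp only [dotProduct, hmv, sub_mul, ite_mul, one_mul, zero_mul,
    Finset.sum_sub_distrib, Finset.sum_ite_eq', Finset.mem_univ, if_true]
  ring

lemma sum_formula {N : ℕ} {C M Z : Matrix (Fin N) (Fin N) ℝ}
    (hCsym' : ∀ i j, C i j = C j i)
    (hMf : ∀ i j, M i j = (N:ℝ) * (if i = j then 1 else 0) + (N:ℝ) * (Z j j - Z i j)) :
    ∑ i, ∑ j, C i j * M i j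
      = (N:ℝ) * (∑ j, C j j)
        + (N:ℝ)/2 * ∑ i, ∑ j, C i j * (Z i i + Z j j - Z i j - Z j i) := by
  have hz1 : ∑ i, ∑ j, C i j * Z j j = ∑ i, ∑ j, C i j * Z i i := by
    rw [Finset.sum_comm]
    exact Finset.sum_congr rfl fun a _ => Finset.sum_congr rfl fun b _ => by rw [hCsym' b a]
  have hz2 : ∑ i, ∑ j, C i j * Z j i = ∑ i, ∑ j, C i j * Z i j := by
    rw [Finset.sum_comm]
    exact Finset.sum_congr rfl fun a _ => Finset.sum_congr rfl fun b _ => by rw [hCsym' b a]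
  have hexp : ∑ i, ∑ j, C i j * (Z i i + Z j j - Z i j - Z j i)
      = (∑ i, ∑ j, C i j * Z i i) + (∑ i, ∑ j, C i j * Z j j)
        - (∑ i, ∑ j, C i j * Z i j) - (∑ i, ∑ j, C i j * Z j i) := by
    simp only [mul_add, mul_sub, Finset.sum_add_distrib, Finset.sum_sub_distrib]
  have hdiag : ∑ i, ∑ j, C i j * ((N:ℝ) * (if i = j then 1 else 0)) = (N:ℝ) * ∑ j, C j j := by
    rw [Finset.mul_sum]
    refine Finset.sum_congr rfl fun i _ => ?_
    simp [mul_ite, Finset.sum_ite_eq', mul_comm]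
  have hterm : ∀ i j, C i j * M i j = C i j * ((N:ℝ) * (if i = j then 1 else 0))
      + (N:ℝ) * (C i j * Z j j) - (N:ℝ) * (C i j * Z i j) := fun i j => by
    rw [hMf i j]; ring
  rw [Finset.sum_congr rfl fun i _ => Finset.sum_congr rfl fun j _ => hterm i j]
  simp only [Finset.sum_add_distrib, Finset.sum_sub_distrib, ← Finset.mul_sum]
  rw [hdiag, hexp, hz1, hz2]
  ring

lemma amat_sym {N : ℕ} {P : Matrix (Fin N) (Fin N) ℝ} (hsym : P = Pᵀ) :
    Amat P = (Amat P)ᵀ := by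
  ext i j
  have hp : P i j = P j i := by conv_lhs => rw [hsym, Matrix.transpose_apply]
  simp only [Amat, Jmat, Matrix.transpose_apply, Matrix.add_apply, Matrix.sub_apply,
    Matrix.smul_apply, Matrix.one_apply, Matrix.of_apply, smul_eq_mul]
  rw [hp]
  congr 2
  simp [eq_comm]

theorem weighted_mfpt_sum_convex {N : ℕ} (hN : 2 ≤ N)
    (C : Matrix (Fin N) (Fin N) ℝ) (hC : ∀ i j, 0 ≤ C i j) (hCsym : C = Cᵀ)
    (P0 P1 : Matrix (Fin N) (Fin N) ℝ)
    (h0 : IsRowStochastic P0) (h0sym : P0 = P0ᵀ) (h0irr : IsIrreducibleMC P0)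
    (h1 : IsRowStochastic P1) (h1sym : P1 = P1ᵀ) (h1irr : IsIrreducibleMC P1)
    (t : ℝ) (ht : t ∈ Set.Icc (0 : ℝ) 1)
    (htirr : IsIrreducibleMC ((1 - t) • P0 + t • P1))
    (M0 M1 Mt : Matrix (Fin N) (Fin N) ℝ)
    (hM0 : IsMFPT P0 M0) (hM1 : IsMFPT P1 M1)
    (hMt : IsMFPT ((1 - t) • P0 + t • P1) Mt) :
    ∑ i, ∑ j, C i j * Mt i j ≤
      (1 - t) * ∑ i, ∑ j, C i j * M0 i j + t * ∑ i, ∑ j, C i j * M1 i j := by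
  obtain ⟨ht0, ht1⟩ := ht
  set Pt := (1 - t) • P0 + t • P1 with hPtdef
  have hCsym' : ∀ i j, C i j = C j i := fun i j => by
    conv_lhs => rw [hCsym, Matrix.transpose_apply]
  have hPt : IsRowStochastic Pt := by
    constructor
    · intro i j
      simp only [hPtdef, Matrix.add_apply, Matrix.smul_apply, smul_eq_mul]
      have := h0.1 i j; have := h1.1 i j
      nlinarith
    · intro i
      simp only [hPtdef, Matrix.add_apply, Matrix.smul_apply, smul_eq_mul,
        Finset.sum_add_distrib, ← Finset.mul_sum, h0.2 i, h1.2 i]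
      ring
  have hPtsym : Pt = Ptᵀ := by
    ext i j
    have e0 : P0 i j = P0 j i := by conv_lhs => rw [h0sym, Matrix.transpose_apply]
    have e1 : P1 i j = P1 j i := by conv_lhs => rw [h1sym, Matrix.transpose_apply]
    simp only [hPtdef, Matrix.transpose_apply, Matrix.add_apply, Matrix.smul_apply,
      smul_eq_mul, e0, e1]
  have hU0 := amat_isUnit hN h0 h0sym h0irr
  have hU1 := amat_isUnit hN h1 h1sym h1irr
  have hUt := amat_isUnit hN hPt hPtsym htirr
  have hAaff : Amat Pt = (1 - t) • Amat P0 + t • Amat P1 := by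
    ext i j
    simp only [Amat, Jmat, hPtdef, Matrix.add_apply, Matrix.sub_apply, Matrix.smul_apply,
      Matrix.one_apply, Matrix.of_apply, smul_eq_mul]
    ring
  set Z0 := (Amat P0)⁻¹
  set Z1 := (Amat P1)⁻¹
  set Zt := (Amat Pt)⁻¹
  have hS0 := sum_formula (Z := Z0) hCsym' (mfpt_formula hN h0 h0sym hU0 hM0)
  have hS1 := sum_formula (Z := Z1) hCsym' (mfpt_formula hN h1 h1sym hU1 hM1)
  have hSt := sum_formula (Z := Zt) hCsym' (mfpt_formula hN hPt hPtsym hUt hMt)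
  have hqf : ∀ i j, Zt i i + Zt j j - Zt i j - Zt j i
      ≤ (1 - t) * (Z0 i i + Z0 j j - Z0 i j - Z0 j i)
        + t * (Z1 i i + Z1 j j - Z1 i j - Z1 j i) := by
    intro i j
    have h := inv_quad_convex t ht0 ht1 (amat_sym h0sym) (amat_sym h1sym)
      (quad_nonneg h0 h0sym) (quad_nonneg h1 h1sym) hU0 hU1
      (by rw [← hAaff]; exact hUt)
      (fun k => (if k = i then (1:ℝ) else 0) - (if k = j then 1 else 0))
    rw [← hAaff] at h
    rwa [qf_entry, qf_entry, qf_entry] at h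
  have hsum : ∑ i, ∑ j, C i j * (Zt i i + Zt j j - Zt i j - Zt j i)
      ≤ (1 - t) * ∑ i, ∑ j, C i j * (Z0 i i + Z0 j j - Z0 i j - Z0 j i)
        + t * ∑ i, ∑ j, C i j * (Z1 i i + Z1 j j - Z1 i j - Z1 j i) := by
    rw [Finset.mul_sum, Finset.mul_sum, ← Finset.sum_add_distrib]
    refine Finset.sum_le_sum fun i _ => ?_
    rw [Finset.mul_sum, Finset.mul_sum, ← Finset.sum_add_distrib]
    refine Finset.sum_le_sum fun j _ => ?_
    have h := hqf i j
    have hc := hC i j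
    nlinarith
  rw [hS0, hS1, hSt]
  have hN2 : (0:ℝ) ≤ (N:ℝ)/2 := by positivity
  nlinarith [mul_le_mul_of_nonneg_left hsum hN2]
end

section
/- Let N ≥ 2 and c > 0. Let P₀ and P₁ be symmetric irreducible row-stochastic N×N matrices with P₀ ≠ P₁, let t ∈ (0,1), and set P_t = (1−t)·P₀ + t·P₁. Assume P_t is irreducible, and let M₀, M₁ and M_t be the mean first passage time matrices of P₀, P₁ and P_t respectively. Then c·Σ_{i,j} (M_t)_{ij} < (1−t)·c·Σ_{i,j} (M₀)_{ij} + t·c·Σ_{i,j} (M₁)_{ij}; that is, when the weight matrix C has identical positive entries c, the weighted sum of mean first passage times S(P,C) is a strictly convex function of P on the set of symmetric irreducible row-stochastic matrices. -/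
open Matrix Finset

/-!
For symmetric stochastic `P` the uniform distribution is stationary, so the mean return times are
`M j j = N` and, with `A(P) = 1 - P + 𝟙𝟙ᵀ / N`, the first passage equations give
`M = N (1 - A(P)⁻¹) + 𝟙𝟙ᵀ M / N`; taking traces, `∑ i j, M i j = N² tr A(P)⁻¹`.

The map `P ↦ A(P)` is affine and injective, and `A(P)` is positive definite when `P` is also
irreducible, because `xᵀ A(P) x = ½ ∑ i j, P i j (x i - x j)² + (∑ i, x i)² / N`.

Finally `A ↦ tr A⁻¹` is strictly convex on positive definite matrices: for `X = (a A₀ + b A₁)⁻¹`,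
`a tr A₀⁻¹ + b tr A₁⁻¹ - tr X = a tr ((X - A₀⁻¹) A₀ (X - A₀⁻¹)) + b tr ((X - A₁⁻¹) A₁ (X - A₁⁻¹))`,
and the right side vanishes only if `A₀⁻¹ = X = A₁⁻¹`.
-/

namespace Matrix

variable {n : Type*} [Fintype n]

lemma conjTranspose_mul_mul_same_apply_self {m R : Type*} [CommSemiring R] [StarRing R]
    (A : Matrix n n R) (D : Matrix n m R) (j : m) :
    (Dᴴ * A * D) j j = star (fun i => D i j) ⬝ᵥ (A *ᵥ fun i => D i j) := by
  simp only [mul_apply, conjTranspose_apply, dotProduct, mulVec, Finset.sum_mul, Finset.mul_sum,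
    Pi.star_apply, mul_assoc]
  exact Finset.sum_comm

lemma PosDef.trace_conjTranspose_mul_mul_same_pos {m : Type*} [Fintype m] {A : Matrix n n ℝ}
    (hA : A.PosDef) {D : Matrix n m ℝ} (hD : D ≠ 0) : 0 < (Dᴴ * A * D).trace := by
  obtain ⟨i, j, hij⟩ : ∃ i j, D i j ≠ 0 := by
    by_contra! h
    exact hD (ext h)
  refine Finset.sum_pos' (fun k _ => (hA.posSemidef.conjTranspose_mul_mul_same D).diag_nonneg)
    ⟨j, Finset.mem_univ j, ?_⟩
  rw [diag_apply, conjTranspose_mul_mul_same_apply_self]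
  exact hA.dotProduct_mulVec_pos (Function.ne_iff.mpr ⟨i, hij⟩)

omit [Fintype n] in
lemma convex_setOf_posDef : Convex ℝ {A : Matrix n n ℝ | A.PosDef} := by
  intro A₀ hA₀ A₁ hA₁ a b ha hb hab
  rcases ha.eq_or_lt with rfl | ha
  · rw [zero_add] at hab
    simpa [hab] using hA₁
  · exact (hA₀.smul ha).add_posSemidef (hA₁.posSemidef.smul hb)

variable [DecidableEq n]

lemma PosDef.conjTranspose_sub_inv_mul_mul_sub_inv {A X : Matrix n n ℝ} (hA : A.PosDef)
    (hX : Xᴴ = X) : (X - A⁻¹)ᴴ * A * (X - A⁻¹) = X * A * X - 2 • X + A⁻¹ := by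
  have hdet : IsUnit A.det := (isUnit_iff_isUnit_det A).mp hA.isUnit
  rw [conjTranspose_sub, hX, hA.inv.isHermitian.eq, sub_mul, sub_mul, mul_sub, mul_sub,
    nonsing_inv_mul _ hdet, Matrix.mul_assoc X A A⁻¹, mul_nonsing_inv _ hdet, Matrix.mul_one,
    Matrix.one_mul, Matrix.one_mul, two_smul]
  abel

theorem strictConvexOn_trace_inv :
    StrictConvexOn ℝ {A : Matrix n n ℝ | A.PosDef} fun A => A⁻¹.trace := by
  refine ⟨convex_setOf_posDef, fun A₀ hA₀ A₁ hA₁ hne a b ha hb hab => ?_⟩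
  have hA : (a • A₀ + b • A₁).PosDef := (hA₀.smul ha).add (hA₁.smul hb)
  set X := (a • A₀ + b • A₁)⁻¹
  have hX : Xᴴ = X := hA.inv.isHermitian.eq
  have hXAX : a • (X * A₀ * X) + b • (X * A₁ * X) = X := by
    have : X * (a • A₀ + b • A₁) * X = X := by
      rw [nonsing_inv_mul _ ((isUnit_iff_isUnit_det _).mp hA.isUnit), Matrix.one_mul]
    rwa [Matrix.mul_add, Matrix.add_mul, Matrix.mul_smul, Matrix.mul_smul, Matrix.smul_mul,
      Matrix.smul_mul] at this
  have hdefect : a * ((X - A₀⁻¹)ᴴ * A₀ * (X - A₀⁻¹)).trace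
      + b * ((X - A₁⁻¹)ᴴ * A₁ * (X - A₁⁻¹)).trace
      = a * A₀⁻¹.trace + b * A₁⁻¹.trace - X.trace := by
    have := congrArg trace hXAX
    simp only [trace_add, trace_smul, smul_eq_mul] at this
    rw [hA₀.conjTranspose_sub_inv_mul_mul_sub_inv hX, hA₁.conjTranspose_sub_inv_mul_mul_sub_inv hX]
    simp only [trace_add, trace_sub, trace_smul]
    linear_combination this - 2 * X.trace * hab
  have h₀ := (hA₀.posSemidef.conjTranspose_mul_mul_same (X - A₀⁻¹)).trace_nonneg
  have h₁ := (hA₁.posSemidef.conjTranspose_mul_mul_same (X - A₁⁻¹)).trace_nonneg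
  have hpos : 0 < a * ((X - A₀⁻¹)ᴴ * A₀ * (X - A₀⁻¹)).trace
      + b * ((X - A₁⁻¹)ᴴ * A₁ * (X - A₁⁻¹)).trace := by
    by_cases hX₀ : X - A₀⁻¹ = 0
    · have hX₁ : X - A₁⁻¹ ≠ 0 := fun hX₁ => hne <|
        inv_inj ((sub_eq_zero.mp hX₀).symm.trans (sub_eq_zero.mp hX₁))
          ((isUnit_iff_isUnit_det _).mp hA₀.isUnit)
      exact add_pos_of_nonneg_of_pos (mul_nonneg ha.le h₀)
        (mul_pos hb (hA₁.trace_conjTranspose_mul_mul_same_pos hX₁))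
    · exact add_pos_of_pos_of_nonneg (mul_pos ha (hA₀.trace_conjTranspose_mul_mul_same_pos hX₀))
        (mul_nonneg hb.le h₁)
  simp only [smul_eq_mul]
  linarith

lemma apply_eq_of_pow_apply_ne_zero {R α : Type*} [Semiring R] {P : Matrix n n R} {v : n → α}
    (hv : ∀ i j, P i j ≠ 0 → v i = v j) (k : ℕ) {i j : n} (h : (P ^ k) i j ≠ 0) : v i = v j := by
  induction k generalizing j with
  | zero =>
    obtain rfl : i = j := by
      by_contra hij
      exact h (by rw [pow_zero, one_apply_ne hij])
    rfl
  | succ k ih =>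
    rw [pow_succ, mul_apply] at h
    obtain ⟨l, -, hl⟩ := Finset.exists_ne_zero_of_sum_ne_zero h
    exact (ih (left_ne_zero_of_mul hl)).trans (hv l j (right_ne_zero_of_mul hl))

lemma sum_mul_sub_sq_of_mem_doublyStochastic {P : Matrix n n ℝ} (hP : P ∈ doublyStochastic ℝ n)
    (x : n → ℝ) : ∑ i, ∑ j, P i j * (x i - x j) ^ 2 = 2 * (x ⬝ᵥ x - x ⬝ᵥ (P *ᵥ x)) := by
  have hrow : ∑ i, ∑ j, P i j * x i ^ 2 = x ⬝ᵥ x := by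
    simp only [← Finset.sum_mul, sum_row_of_mem_doublyStochastic hP, one_mul, sq]
    rfl
  have hcol : ∑ i, ∑ j, P i j * x j ^ 2 = x ⬝ᵥ x := by
    rw [Finset.sum_comm]
    simp only [← Finset.sum_mul, sum_col_of_mem_doublyStochastic hP, one_mul, sq]
    rfl
  have hcross : ∑ i, ∑ j, P i j * (x i * x j) = x ⬝ᵥ (P *ᵥ x) := by
    simp only [dotProduct, mulVec, Finset.mul_sum]
    exact Finset.sum_congr rfl fun i _ => Finset.sum_congr rfl fun j _ => by ring
  calc ∑ i, ∑ j, P i j * (x i - x j) ^ 2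
      = ∑ i, ∑ j, P i j * x i ^ 2 + ∑ i, ∑ j, P i j * x j ^ 2
        - 2 * ∑ i, ∑ j, P i j * (x i * x j) := by
        simp only [Finset.mul_sum, ← Finset.sum_add_distrib, ← Finset.sum_sub_distrib]
        exact Finset.sum_congr rfl fun i _ => Finset.sum_congr rfl fun j _ => by ring
    _ = 2 * (x ⬝ᵥ x - x ⬝ᵥ (P *ᵥ x)) := by rw [hrow, hcol, hcross]; ring

end Matrix

lemma IsRowStochastic.mem_doublyStochastic {N : ℕ} {P : Matrix (Fin N) (Fin N) ℝ}
    (hP : IsRowStochastic P) (hsym : P = Pᵀ) : P ∈ doublyStochastic ℝ (Fin N) := by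
  refine mem_doublyStochastic_iff_sum.mpr ⟨hP.1, hP.2, fun j => ?_⟩
  rw [hsym]
  exact hP.2 j

lemma IsIrreducibleMC.apply_eq_of_forall_ne_zero {N : ℕ} {P : Matrix (Fin N) (Fin N) ℝ}
    (hP : IsIrreducibleMC P) {α : Type*} {v : Fin N → α} (hv : ∀ i j, P i j ≠ 0 → v i = v j)
    (i j : Fin N) : v i = v j :=
  have ⟨k, _, hk⟩ := hP i j
  apply_eq_of_pow_apply_ne_zero hv k hk.ne'

/-- `𝟙πᵀ` for the uniform distribution `π`. -/
noncomputable def uniformProjection (N : ℕ) : Matrix (Fin N) (Fin N) ℝ :=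
  of fun _ _ => (N : ℝ)⁻¹

/-- For doubly stochastic `P`, the inverse is the Kemeny–Snell fundamental matrix. -/
noncomputable def kemenySnellMatrix {N : ℕ} (P : Matrix (Fin N) (Fin N) ℝ) :
    Matrix (Fin N) (Fin N) ℝ :=
  1 - P + uniformProjection N

section kemenySnell

variable {N : ℕ} {P : Matrix (Fin N) (Fin N) ℝ}

lemma smul_uniformProjection [NeZero N] : (N : ℝ) • uniformProjection N = of fun _ _ => 1 := by
  ext i j
  simp [uniformProjection, NeZero.ne]

lemma kemenySnellMatrix_mul_uniformProjection [NeZero N] (hP : P ∈ doublyStochastic ℝ (Fin N)) :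
    kemenySnellMatrix P * uniformProjection N = uniformProjection N := by
  have hPW : P * uniformProjection N = uniformProjection N := by
    ext i j
    simp [uniformProjection, mul_apply, ← sum_mul, sum_row_of_mem_doublyStochastic hP]
  have hWW : uniformProjection N * uniformProjection N = uniformProjection N := by
    ext i j
    simp only [uniformProjection, mul_apply, of_apply, sum_const, card_univ, Fintype.card_fin,
      nsmul_eq_mul]
    field_simp
  rw [kemenySnellMatrix, Matrix.add_mul, Matrix.sub_mul, Matrix.one_mul, hPW, hWW, sub_self,
    zero_add]

lemma kemenySnellMatrix_smul_add_smul (P Q : Matrix (Fin N) (Fin N) ℝ) {a b : ℝ}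
    (hab : a + b = 1) :
    kemenySnellMatrix (a • P + b • Q) = a • kemenySnellMatrix P + b • kemenySnellMatrix Q := by
  ext i j
  simp only [kemenySnellMatrix, uniformProjection, Matrix.add_apply, Matrix.sub_apply,
    Matrix.smul_apply, of_apply, smul_eq_mul]
  linear_combination ((1 : Matrix (Fin N) (Fin N) ℝ) i j + (N : ℝ)⁻¹) * hab.symm

lemma kemenySnellMatrix_injective : Function.Injective (kemenySnellMatrix (N := N)) := by
  intro P Q h
  simpa [kemenySnellMatrix] using h

lemma dotProduct_kemenySnellMatrix_mulVec (hP : P ∈ doublyStochastic ℝ (Fin N))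
    (x : Fin N → ℝ) : x ⬝ᵥ (kemenySnellMatrix P *ᵥ x)
      = (∑ i, ∑ j, P i j * (x i - x j) ^ 2) / 2 + (∑ i, x i) ^ 2 / N := by
  have hW : x ⬝ᵥ (uniformProjection N *ᵥ x) = (∑ i, x i) ^ 2 / N := by
    simp only [uniformProjection, dotProduct, mulVec, of_apply, ← Finset.mul_sum,
      ← Finset.sum_mul]
    ring
  rw [sum_mul_sub_sq_of_mem_doublyStochastic hP, kemenySnellMatrix, add_mulVec, sub_mulVec,
    one_mulVec, dotProduct_add, dotProduct_sub, hW]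
  ring

theorem posDef_kemenySnellMatrix (hP : IsRowStochastic P) (hsym : P = Pᵀ)
    (hirr : IsIrreducibleMC P) : (kemenySnellMatrix P).PosDef := by
  refine .of_dotProduct_mulVec_pos ((isHermitian_one.sub (isHermitian_iff_isSymm.mpr hsym.symm)).add
    (isHermitian_iff_isSymm.mpr rfl)) fun x hx => ?_
  obtain ⟨i₀, hi₀⟩ := Function.ne_iff.mp hx
  rw [star_trivial, dotProduct_kemenySnellMatrix_mulVec (hP.mem_doublyStochastic hsym)]
  have hterm (i j : Fin N) : 0 ≤ P i j * (x i - x j) ^ 2 := mul_nonneg (hP.1 i j) (sq_nonneg _)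
  have hdirichlet : 0 ≤ ∑ i, ∑ j, P i j * (x i - x j) ^ 2 :=
    Finset.sum_nonneg fun i _ => Finset.sum_nonneg fun j _ => hterm i j
  by_cases hconst : ∀ i j, P i j ≠ 0 → x i = x j
  · have hN : (0 : ℝ) < N := Nat.cast_pos.mpr (Fin.pos i₀)
    have hsum : ∑ i, x i = N * x i₀ := by
      simp [hirr.apply_eq_of_forall_ne_zero hconst _ i₀]
    have : 0 < (∑ i, x i) ^ 2 / N :=
      div_pos (sq_pos_of_ne_zero (hsum ▸ mul_ne_zero hN.ne' hi₀)) hN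
    positivity
  · obtain ⟨i, j, hij, hxij⟩ : ∃ i j, P i j ≠ 0 ∧ x i ≠ x j := by simpa using hconst
    have : 0 < ∑ i, ∑ j, P i j * (x i - x j) ^ 2 :=
      Finset.sum_pos' (fun i _ => Finset.sum_nonneg fun j _ => hterm i j)
        ⟨i, Finset.mem_univ i, Finset.sum_pos' (fun j _ => hterm i j) ⟨j, Finset.mem_univ j,
          mul_pos ((hP.1 i j).lt_of_ne' hij) (sq_pos_of_ne_zero (sub_ne_zero.mpr hxij))⟩⟩
    positivity

end kemenySnell

section mfpt

variable {N : ℕ} {P M : Matrix (Fin N) (Fin N) ℝ}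

lemma IsMFPT.apply_self (hP : P ∈ doublyStochastic ℝ (Fin N)) (hM : IsMFPT P M) (j : Fin N) :
    M j j = N := by
  have hcol : ∑ i, M i j = N + ∑ k ∈ univ.erase j, M k j := by
    rw [sum_congr rfl fun i _ => hM i j, sum_add_distrib, sum_comm]
    simp only [Finset.filter_ne', sum_const, card_univ, Fintype.card_fin, nsmul_eq_mul, mul_one]
    simp only [← sum_mul, sum_col_of_mem_doublyStochastic hP, one_mul]
  linarith [add_sum_erase univ (fun k => M k j) (mem_univ j)]

lemma IsMFPT.one_sub_mul (hP : P ∈ doublyStochastic ℝ (Fin N)) (hM : IsMFPT P M) :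
    (1 - P) * M = (of fun _ _ => 1) - (N : ℝ) • P := by
  ext i j
  have hPM : (P * M) i j = ∑ k ∈ univ.filter (· ≠ j), P i k * M k j + P i j * N := by
    rw [mul_apply, Finset.filter_ne', ← hM.apply_self hP j, sum_erase_add _ _ (mem_univ j)]
  rw [Matrix.sub_mul, Matrix.one_mul, Matrix.sub_apply, hPM, hM i j]
  simp only [Matrix.sub_apply, Matrix.smul_apply, of_apply, smul_eq_mul]
  ring

lemma IsMFPT.eq_smul_one_sub_inv_add [NeZero N] (hP : P ∈ doublyStochastic ℝ (Fin N))
    (hA : IsUnit (kemenySnellMatrix P)) (hM : IsMFPT P M) :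
    M = (N : ℝ) • (1 - (kemenySnellMatrix P)⁻¹) + uniformProjection N * M := by
  have hAW := kemenySnellMatrix_mul_uniformProjection hP
  set W := uniformProjection N
  set Z := (kemenySnellMatrix P)⁻¹
  have hZA : Z * kemenySnellMatrix P = 1 := nonsing_inv_mul _ ((isUnit_iff_isUnit_det _).mp hA)
  have hZW : Z * W = W := by rw [← hAW, ← Matrix.mul_assoc, hZA, Matrix.one_mul, hAW]
  have hZP : Z * P = Z - 1 + W := by
    have : P = 1 - kemenySnellMatrix P + W := by rw [kemenySnellMatrix]; abel
    rw [this, Matrix.mul_add, Matrix.mul_sub, hZA, hZW, Matrix.mul_one]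
  have hAM : kemenySnellMatrix P * M = (N : ℝ) • W - (N : ℝ) • P + W * M := by
    rw [kemenySnellMatrix, Matrix.add_mul, hM.one_sub_mul hP, smul_uniformProjection]
  calc M = Z * (kemenySnellMatrix P * M) := by rw [← Matrix.mul_assoc, hZA, Matrix.one_mul]
    _ = (N : ℝ) • W - (N : ℝ) • (Z - 1 + W) + W * M := by
      rw [hAM, Matrix.mul_add, Matrix.mul_sub, Matrix.mul_smul, Matrix.mul_smul, hZW, hZP,
        ← Matrix.mul_assoc, hZW]
    _ = (N : ℝ) • (1 - Z) + W * M := by module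

theorem IsMFPT.sum_eq [NeZero N] (hP : P ∈ doublyStochastic ℝ (Fin N))
    (hA : IsUnit (kemenySnellMatrix P)) (hM : IsMFPT P M) :
    ∑ i, ∑ j, M i j = N ^ 2 * (kemenySnellMatrix P)⁻¹.trace := by
  have htrM : M.trace = N * N := by simp [trace, hM.apply_self hP]
  have htrWM : (uniformProjection N * M).trace = (N : ℝ)⁻¹ * ∑ i, ∑ j, M i j := by
    simp only [trace, diag_apply, mul_apply, uniformProjection, of_apply, ← mul_sum]
    rw [sum_comm]
  have := congrArg trace (hM.eq_smul_one_sub_inv_add hP hA)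
  rw [trace_add, trace_smul, trace_sub, trace_one, htrM, htrWM] at this
  simp only [Fintype.card_fin, smul_eq_mul] at this
  linear_combination (-(N : ℝ)) * this
    - (∑ i, ∑ j, M i j) * mul_inv_cancel₀ (NeZero.ne (N : ℝ))

end mfpt

theorem mfpt_sum_strictly_convex_general {N : ℕ} (c : ℝ) (hc : 0 < c)
    (P0 P1 : Matrix (Fin N) (Fin N) ℝ)
    (h0 : IsRowStochastic P0) (h0sym : P0 = P0ᵀ) (h0irr : IsIrreducibleMC P0)
    (h1 : IsRowStochastic P1) (h1sym : P1 = P1ᵀ) (h1irr : IsIrreducibleMC P1)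
    (hne : P0 ≠ P1)
    (t : ℝ) (ht : t ∈ Set.Ioo (0 : ℝ) 1)
    (M0 M1 Mt : Matrix (Fin N) (Fin N) ℝ)
    (hM0 : IsMFPT P0 M0) (hM1 : IsMFPT P1 M1)
    (hMt : IsMFPT ((1 - t) • P0 + t • P1) Mt) :
    c * ∑ i, ∑ j, Mt i j <
      (1 - t) * (c * ∑ i, ∑ j, M0 i j) + t * (c * ∑ i, ∑ j, M1 i j) := by
  have : NeZero N := ⟨by rintro rfl; exact hne (Subsingleton.elim _ _)⟩
  obtain ⟨ht0, ht1⟩ := ht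
  have hs : 0 < 1 - t := sub_pos.mpr ht1
  have hD0 := h0.mem_doublyStochastic h0sym
  have hD1 := h1.mem_doublyStochastic h1sym
  have hDt := convex_doublyStochastic hD0 hD1 hs.le ht0.le (sub_add_cancel 1 t)
  have hA0 := posDef_kemenySnellMatrix h0 h0sym h0irr
  have hA1 := posDef_kemenySnellMatrix h1 h1sym h1irr
  have hAt := kemenySnellMatrix_smul_add_smul P0 P1 (sub_add_cancel 1 t)
  have hAtu : IsUnit (kemenySnellMatrix ((1 - t) • P0 + t • P1)) :=
    hAt ▸ (convex_setOf_posDef hA0 hA1 hs.le ht0.le (sub_add_cancel 1 t)).isUnit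
  have htrace := strictConvexOn_trace_inv.2 hA0 hA1 (kemenySnellMatrix_injective.ne hne) hs ht0
    (sub_add_cancel 1 t)
  simp only [smul_eq_mul, ← hAt] at htrace
  rw [hM0.sum_eq hD0 hA0.isUnit, hM1.sum_eq hD1 hA1.isUnit, hMt.sum_eq hDt hAtu]
  have hcN : 0 < c * N ^ 2 := mul_pos hc (pow_pos (Nat.cast_pos.mpr (NeZero.pos N)) 2)
  nlinarith [mul_lt_mul_of_pos_left htrace hcN]

theorem mfpt_sum_strictly_convex {N : ℕ} (hN : 2 ≤ N) (c : ℝ) (hc : 0 < c)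
    (P0 P1 : Matrix (Fin N) (Fin N) ℝ)
    (h0 : IsRowStochastic P0) (h0sym : P0 = P0ᵀ) (h0irr : IsIrreducibleMC P0)
    (h1 : IsRowStochastic P1) (h1sym : P1 = P1ᵀ) (h1irr : IsIrreducibleMC P1)
    (hne : P0 ≠ P1)
    (t : ℝ) (ht : t ∈ Set.Ioo (0 : ℝ) 1)
    (htirr : IsIrreducibleMC ((1 - t) • P0 + t • P1))
    (M0 M1 Mt : Matrix (Fin N) (Fin N) ℝ)
    (hM0 : IsMFPT P0 M0) (hM1 : IsMFPT P1 M1)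
    (hMt : IsMFPT ((1 - t) • P0 + t • P1) Mt) :
    c * ∑ i, ∑ j, Mt i j <
      (1 - t) * (c * ∑ i, ∑ j, M0 i j) + t * (c * ∑ i, ∑ j, M1 i j) :=
  mfpt_sum_strictly_convex_general c hc P0 P1 h0 h0sym h0irr h1 h1sym h1irr hne t ht M0 M1 Mt hM0
    hM1 hMt
end

section
/- Let N ≥ 3 and let P be any symmetric irreducible row-stochastic N×N matrix with mean first passage time matrix M. Then Σ_{i≠j} M_{ij} ≥ N³ − 2N² + N; that is, the total sum of mean first passage times of any reversible (symmetric) Markov chain on N states is at least N(N−1)². -/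
open Matrix Finset

/-!
With `A = I - P + J/N`, the MFPT equations say `(I - P) M = J - N P` (the diagonal of `M` is `N`
because the uniform distribution is stationary), which makes
`Z = I - M/N + J M/N²` an explicit inverse of `A`; taking traces gives
`∑_{i ≠ j} M i j = N² (tr A⁻¹ - 1)`. For symmetric `P` the quadratic form of `A` is
`½ ∑ P i j (x i - x j)² + (∑ x)² / N ≥ 0`, so the invertible `A` is positive definite. As `A 1 = 1`,
the other eigenvalues `μ` of `A` satisfy `∑ μ = N - tr P ≤ N`, and the AM-HM inequality gives
`tr A⁻¹ - 1 = ∑ μ⁻¹ ≥ (N - 1)² / N`.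
-/

namespace Matrix

variable {ι : Type*} [Fintype ι] {P A : Matrix ι ι ℝ}

theorem sum_apply_eq_one_of_eq_transpose (hsym : P = Pᵀ) (hrow : ∀ i, ∑ j, P i j = 1) (j : ι) :
    ∑ i, P i j = 1 := by
  rw [hsym]
  exact hrow j

def onesMatrix (ι : Type*) : Matrix ι ι ℝ := of fun _ _ => 1

theorem posSemidef_onesMatrix : (onesMatrix ι).PosSemidef := by
  convert posSemidef_vecMulVec_self_star (1 : ι → ℝ)
  ext
  simp [onesMatrix, vecMulVec]

theorem mul_onesMatrix (hrow : ∀ i, ∑ j, P i j = 1) : P * onesMatrix ι = onesMatrix ι := by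
  ext i j
  simp [mul_apply, onesMatrix, hrow]

theorem onesMatrix_mul_onesMatrix :
    onesMatrix ι * onesMatrix ι = (Fintype.card ι : ℝ) • onesMatrix ι := by
  ext i j
  simp [mul_apply, onesMatrix]

variable [DecidableEq ι]

theorem dotProduct_one_sub_mulVec (hrow : ∀ i, ∑ j, P i j = 1) (hcol : ∀ j, ∑ i, P i j = 1)
    (x : ι → ℝ) : x ⬝ᵥ ((1 - P) *ᵥ x) = (∑ i, ∑ j, P i j * (x i - x j) ^ 2) / 2 := by
  have expand : ∀ i j, P i j * (x i - x j) ^ 2 =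
      P i j * x i ^ 2 + P i j * x j ^ 2 - 2 * (x i * (P i j * x j)) := fun i j => by ring
  simp only [expand, sum_add_distrib, sum_sub_distrib, ← mul_sum, ← sum_mul, hrow, one_mul]
  rw [sum_comm]
  simp only [← sum_mul, hcol, one_mul]
  rw [sub_mulVec, one_mulVec, dotProduct_sub]
  simp only [dotProduct, mulVec, ← pow_two]
  ring

theorem posSemidef_one_sub (hP : ∀ i j, 0 ≤ P i j) (hrow : ∀ i, ∑ j, P i j = 1)
    (hsym : P = Pᵀ) : (1 - P).PosSemidef := by
  refine .of_dotProduct_mulVec_nonneg ?_ fun x => ?_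
  · rw [IsHermitian, conjTranspose_eq_transpose_of_trivial, transpose_sub, transpose_one, ← hsym]
  · rw [star_trivial, dotProduct_one_sub_mulVec hrow (sum_apply_eq_one_of_eq_transpose hsym hrow)]
    exact div_nonneg (sum_nonneg fun i _ => sum_nonneg fun j _ =>
      mul_nonneg (hP i j) (sq_nonneg _)) zero_le_two

/-- `I - P + Π`, where `Π = J / n` is the stationary projector of a doubly stochastic `P`; its
inverse is the fundamental matrix of Kemeny and Snell. -/
noncomputable def kemenySnell (P : Matrix ι ι ℝ) : Matrix ι ι ℝ :=
  1 - P + (Fintype.card ι : ℝ)⁻¹ • onesMatrix ι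

theorem posSemidef_kemenySnell (hP : ∀ i j, 0 ≤ P i j) (hrow : ∀ i, ∑ j, P i j = 1)
    (hsym : P = Pᵀ) : (kemenySnell P).PosSemidef :=
  (posSemidef_one_sub hP hrow hsym).add (posSemidef_onesMatrix.smul (by positivity))

section Nonempty

variable [Nonempty ι]

theorem kemenySnell_mul_onesMatrix (hrow : ∀ i, ∑ j, P i j = 1) :
    kemenySnell P * onesMatrix ι = onesMatrix ι := by
  rw [kemenySnell, add_mul, sub_mul, one_mul, mul_onesMatrix hrow, smul_mul,
    onesMatrix_mul_onesMatrix, smul_smul, inv_mul_cancel₀ (by positivity), one_smul, sub_self,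
    zero_add]

theorem kemenySnell_mulVec_one (hrow : ∀ i, ∑ j, P i j = 1) : kemenySnell P *ᵥ 1 = 1 := by
  ext i
  simpa [mulVec, dotProduct, mul_apply, onesMatrix] using
    congr_fun (congr_fun (kemenySnell_mul_onesMatrix hrow) i) i

theorem trace_kemenySnell : (kemenySnell P).trace = Fintype.card ι - P.trace + 1 := by
  simp [kemenySnell, onesMatrix, trace, sum_add_distrib, sum_sub_distrib]

end Nonempty

theorem IsHermitian.trace_inv (hA : A.IsHermitian) (h : ∀ i, hA.eigenvalues i ≠ 0) :
    A⁻¹.trace = ∑ i, (hA.eigenvalues i)⁻¹ := by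
  set U := Unitary.conjStarAlgAut ℝ _ hA.eigenvectorUnitary
  have hinv : U (diagonal fun i => (hA.eigenvalues i)⁻¹) * A = 1 := by
    conv_lhs => arg 2; rw [hA.spectral_theorem]
    rw [← map_mul, diagonal_mul_diagonal]
    simp [inv_mul_cancel₀ (h _), diagonal_one]
  rw [inv_eq_left_inv hinv, Unitary.conjStarAlgAut_apply, trace_mul_cycle,
    Unitary.coe_star_mul_self, one_mul, trace_diagonal]

theorem IsHermitian.exists_eigenvalues_eq (hA : A.IsHermitian) {μ : ℝ} {x : ι → ℝ}
    (hx : A *ᵥ x = μ • x) (hx0 : x ≠ 0) : ∃ i, hA.eigenvalues i = μ := by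
  rw [← Set.mem_range, ← hA.spectrum_real_eq_range_eigenvalues, spectrum.mem_iff,
    ← mulVec_injective_iff_isUnit]
  refine fun hinj => hx0 (hinj ?_)
  simp [sub_mulVec, hx, Algebra.algebraMap_eq_smul_one, smul_mulVec]

theorem PosDef.sq_card_sub_one_div_le_trace_inv_sub_one (hA : A.PosDef) {x : ι → ℝ}
    (hx : A *ᵥ x = x) (hx0 : x ≠ 0) {c : ℝ} (hc : A.trace - 1 ≤ c) :
    (Fintype.card ι - 1) ^ 2 / c ≤ A⁻¹.trace - 1 := by
  set μ := hA.isHermitian.eigenvalues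
  have hμ : ∀ i, 0 < μ i := hA.eigenvalues_pos
  obtain ⟨i₀, hi₀⟩ := hA.isHermitian.exists_eigenvalues_eq (μ := 1) (by rwa [one_smul]) hx0
  set s := univ.erase i₀
  have hsum : ∑ i ∈ s, μ i = A.trace - 1 := by
    rw [hA.isHermitian.trace_eq_sum_eigenvalues, ← add_sum_erase _ _ (mem_univ i₀)]
    simp [μ, hi₀, s]
  have hsum_inv : ∑ i ∈ s, (μ i)⁻¹ = A⁻¹.trace - 1 := by
    rw [hA.isHermitian.trace_inv fun i => (hμ i).ne', ← add_sum_erase _ _ (mem_univ i₀)]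
    simp [μ, hi₀, s]
  have hcard : (s.card : ℝ) = Fintype.card ι - 1 := by
    rw [card_erase_of_mem (mem_univ _), card_univ, Nat.cast_pred (Fintype.card_pos_iff.2 ⟨i₀⟩)]
  have amhm : (s.card : ℝ) ^ 2 ≤ (∑ i ∈ s, μ i) * ∑ i ∈ s, (μ i)⁻¹ := by
    simpa using sum_sq_le_sum_mul_sum_of_sq_le_mul s (r := 1) (fun i _ => (hμ i).le)
      (fun i _ => (inv_pos.2 (hμ i)).le) (fun i _ => by simp [mul_inv_cancel₀ (hμ i).ne'])
  have hinv_nonneg : 0 ≤ A⁻¹.trace - 1 := hsum_inv ▸ sum_nonneg fun i _ => (inv_pos.2 (hμ i)).le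
  have hc0 : 0 ≤ c := (hsum ▸ sum_nonneg fun i _ => (hμ i).le : 0 ≤ A.trace - 1).trans hc
  refine div_le_of_le_mul₀ hc0 hinv_nonneg ?_
  calc ((Fintype.card ι : ℝ) - 1) ^ 2 = (s.card : ℝ) ^ 2 := by rw [hcard]
    _ ≤ (∑ i ∈ s, μ i) * ∑ i ∈ s, (μ i)⁻¹ := amhm
    _ ≤ (A⁻¹.trace - 1) * c := by
      rw [hsum, hsum_inv, mul_comm]
      exact mul_le_mul_of_nonneg_left hc hinv_nonneg

end Matrix

namespace IsMFPT

variable {N : ℕ} {P M : Matrix (Fin N) (Fin N) ℝ}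

theorem diag_eq (hM : IsMFPT P M) (hcol : ∀ j, ∑ i, P i j = 1) (j : Fin N) : M j j = N := by
  have hcol_sum : ∑ i, M i j = N + ∑ k ∈ univ.erase j, M k j := by
    rw [sum_congr rfl fun i _ => hM i j, sum_add_distrib, sum_comm]
    simp [filter_ne', ← sum_mul, hcol]
  linarith [add_sum_erase univ (fun k => M k j) (mem_univ j)]

theorem one_sub_mul_s4 (hM : IsMFPT P M) (hcol : ∀ j, ∑ i, P i j = 1) :
    (1 - P) * M = onesMatrix (Fin N) - (N : ℝ) • P := by
  ext i j
  have hsplit := sum_erase_add univ (fun k => P i k * M k j) (mem_univ j)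
  rw [hM.diag_eq hcol j] at hsplit
  rw [sub_mul, one_mul, Matrix.sub_apply, Matrix.sub_apply, Matrix.smul_apply, mul_apply, hM i j,
    filter_ne']
  simp only [onesMatrix, of_apply, smul_eq_mul]
  linarith

theorem kemenySnell_mul [NeZero N] (hM : IsMFPT P M) (hrow : ∀ i, ∑ j, P i j = 1)
    (hcol : ∀ j, ∑ i, P i j = 1) :
    kemenySnell P * (1 - (N : ℝ)⁻¹ • M + ((N : ℝ) ^ 2)⁻¹ • (onesMatrix (Fin N) * M)) = 1 := by
  have hAM : kemenySnell P * M =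
      onesMatrix _ - (N : ℝ) • P + (N : ℝ)⁻¹ • (onesMatrix _ * M) := by
    rw [kemenySnell, add_mul, hM.one_sub_mul_s4 hcol, smul_mul, Fintype.card_fin]
  rw [mul_add, mul_sub, mul_one, Matrix.mul_smul, Matrix.mul_smul, ← Matrix.mul_assoc,
    kemenySnell_mul_onesMatrix hrow, hAM, kemenySnell, Fintype.card_fin]
  have hN : (N : ℝ) ≠ 0 := NeZero.ne _
  match_scalars <;> field_simp <;> ring

theorem sum_offDiag_eq [NeZero N] (hM : IsMFPT P M) (hrow : ∀ i, ∑ j, P i j = 1)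
    (hcol : ∀ j, ∑ i, P i j = 1) :
    ∑ i, ∑ j ∈ univ.filter (fun j => j ≠ i), M i j = N ^ 2 * ((kemenySnell P)⁻¹.trace - 1) := by
  have hoff : ∀ i, ∑ j ∈ univ.filter (fun j => j ≠ i), M i j = ∑ j, M i j - N := fun i => by
    rw [filter_ne', sum_erase_eq_sub (mem_univ i), hM.diag_eq hcol i]
  have htrM : M.trace = N * N := by simp [trace, hM.diag_eq hcol]
  have htrJM : (onesMatrix (Fin N) * M).trace = ∑ i, ∑ j, M i j := by
    simp only [trace, diag_apply, mul_apply, onesMatrix, of_apply, one_mul]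
    exact sum_comm
  rw [inv_eq_right_inv (hM.kemenySnell_mul hrow hcol), sum_congr rfl fun i _ => hoff i,
    trace_add, trace_sub, trace_smul, trace_smul, trace_one, htrM, htrJM]
  have hN : (N : ℝ) ≠ 0 := NeZero.ne _
  simp only [sum_sub_distrib, sum_const, card_univ, Fintype.card_fin, smul_eq_mul, nsmul_eq_mul]
  field_simp
  ring

end IsMFPT

theorem total_mfpt_reversible_lower_bound_general {N : ℕ}
    (P M : Matrix (Fin N) (Fin N) ℝ)
    (hP : IsRowStochastic P) (hsym : P = Pᵀ)
    (hM : IsMFPT P M) :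
    (N : ℝ) ^ 3 - 2 * (N : ℝ) ^ 2 + (N : ℝ) ≤
      ∑ i, ∑ j ∈ Finset.univ.filter (fun j => j ≠ i), M i j := by
  obtain ⟨hP0, hrow⟩ := hP
  rcases N.eq_zero_or_pos with rfl | hN
  · simp
  have : NeZero N := ⟨hN.ne'⟩
  have hcol := sum_apply_eq_one_of_eq_transpose hsym hrow
  have hA : (kemenySnell P).PosDef := (posSemidef_kemenySnell hP0 hrow hsym).posDef_iff_isUnit.2
    (.of_mul_eq_one _ (hM.kemenySnell_mul hrow hcol))
  have htr : (kemenySnell P).trace - 1 ≤ N := by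
    rw [trace_kemenySnell, Fintype.card_fin]
    linarith [show 0 ≤ P.trace from sum_nonneg fun i _ => hP0 i i]
  have hbound := hA.sq_card_sub_one_div_le_trace_inv_sub_one (kemenySnell_mulVec_one hrow)
    one_ne_zero htr
  rw [Fintype.card_fin] at hbound
  rw [hM.sum_offDiag_eq hrow hcol]
  calc (N : ℝ) ^ 3 - 2 * N ^ 2 + N = N ^ 2 * ((N - 1) ^ 2 / N) := by field_simp; ring
    _ ≤ _ := by gcongr

theorem total_mfpt_reversible_lower_bound {N : ℕ} (hN : 3 ≤ N)
    (P M : Matrix (Fin N) (Fin N) ℝ)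
    (hP : IsRowStochastic P) (hsym : P = Pᵀ) (hirr : IsIrreducibleMC P)
    (hM : IsMFPT P M) :
    (N : ℝ) ^ 3 - 2 * (N : ℝ) ^ 2 + (N : ℝ) ≤
      ∑ i, ∑ j ∈ Finset.univ.filter (fun j => j ≠ i), M i j :=
  total_mfpt_reversible_lower_bound_general P M hP hsym hM
end

section
/- Let N ≥ 2 and let P be the N×N matrix with P_{ij} = 1/(N−1) for i ≠ j and P_{ii} = 0 (the uniform random walk on the complete graph). If M is a mean first passage time matrix of P, then M_{ij} = N − 1 for all i ≠ j, and consequently Σ_{i≠j} M_{ij} = N(N−1)² = N³ − 2N² + N, so the lower bound N³ − 2N² + N on the total mean first passage times of reversible chains is attained. -/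
open Matrix Finset

theorem mfpt_complete_graph {N : ℕ} (hN : 2 ≤ N)
    (P M : Matrix (Fin N) (Fin N) ℝ)
    (hP : ∀ i j : Fin N, P i j = if i = j then 0 else 1 / ((N : ℝ) - 1))
    (hM : IsMFPT P M) :
    (∀ i j : Fin N, i ≠ j → M i j = (N : ℝ) - 1) ∧
    ∑ i, ∑ j ∈ Finset.univ.filter (fun j => j ≠ i), M i j
      = (N : ℝ) ^ 3 - 2 * (N : ℝ) ^ 2 + (N : ℝ) := by
  have hN2 : (2 : ℝ) ≤ (N : ℝ) := by exact_mod_cast hN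
  have hN1 : (N : ℝ) - 1 ≠ 0 := by linarith
  have hN0 : (N : ℝ) ≠ 0 := by linarith
  have hcard : ∀ j : Fin N, ((Finset.univ.filter (fun k => k ≠ j)).card : ℝ)
      = (N : ℝ) - 1 := by
    intro j
    have : (Finset.univ.filter (fun k => k ≠ j)).card = N - 1 := by
      rw [Finset.filter_ne', Finset.card_erase_of_mem (Finset.mem_univ j)]
      simp
    rw [this, Nat.cast_sub (by omega)]
    simp
  -- key equation
  have key : ∀ i j : Fin N, i ≠ j →
      (N : ℝ) * M i j = ((N : ℝ) - 1)
        + ∑ k ∈ Finset.univ.filter (fun k => k ≠ j), M k j := by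
    intro i j hij
    have hsum : ∑ k ∈ Finset.univ.filter (fun k => k ≠ j), P i k * M k j
        = (1 / ((N : ℝ) - 1)) * ((∑ k ∈ Finset.univ.filter (fun k => k ≠ j), M k j)
            - M i j) := by
      have hterm : ∀ k ∈ Finset.univ.filter (fun k => k ≠ j),
          P i k * M k j = (1 / ((N : ℝ) - 1)) * M k j
            - (if k = i then (1 / ((N : ℝ) - 1)) * M i j else 0) := by
        intro k _
        rw [hP]
        by_cases h : k = i
        · subst h; simp
        · have : ¬ i = k := fun h' => h h'.symm
          simp [this, h]
      rw [Finset.sum_congr rfl hterm, Finset.sum_sub_distrib,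
        Finset.sum_ite_eq' _ i, ← Finset.mul_sum]
      simp [hij]
      ring
    have h1 := hM i j
    rw [hsum] at h1
    field_simp at h1
    linarith
  -- compute column sums
  have hS : ∀ j : Fin N,
      ∑ k ∈ Finset.univ.filter (fun k => k ≠ j), M k j = ((N : ℝ) - 1) ^ 2 := by
    intro j
    set S := ∑ k ∈ Finset.univ.filter (fun k => k ≠ j), M k j with hSdef
    have hsum : (N : ℝ) * S = ((N : ℝ) - 1) * (((N : ℝ) - 1) + S) := by
      have h1 : ∑ i ∈ Finset.univ.filter (fun i => i ≠ j), ((N : ℝ) * M i j)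
          = ∑ _i ∈ Finset.univ.filter (fun i => i ≠ j), (((N : ℝ) - 1) + S) :=
        Finset.sum_congr rfl (fun i hi => by
          rw [key i j (Finset.mem_filter.mp hi).2])
      rw [← Finset.mul_sum, Finset.sum_const] at h1
      simp only [nsmul_eq_mul] at h1
      rw [hcard j] at h1
      exact h1
    nlinarith [hsum]
  have hMij : ∀ i j : Fin N, i ≠ j → M i j = (N : ℝ) - 1 := by
    intro i j hij
    have h := key i j hij
    rw [hS j] at h
    have : (N : ℝ) * M i j = (N : ℝ) * ((N : ℝ) - 1) := by rw [h]; ring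
    exact mul_left_cancel₀ hN0 this
  refine ⟨hMij, ?_⟩
  have hrow : ∀ i : Fin N, ∑ j ∈ Finset.univ.filter (fun j => j ≠ i), M i j
      = ((N : ℝ) - 1) * ((N : ℝ) - 1) := by
    intro i
    rw [Finset.sum_congr rfl (fun j hj => hMij i j
      (Ne.symm (Finset.mem_filter.mp hj).2))]
    rw [Finset.sum_const]
    simp only [nsmul_eq_mul]
    rw [hcard i]
  rw [Finset.sum_congr rfl (fun i _ => hrow i), Finset.sum_const]
  simp only [Finset.card_univ, Fintype.card_fin, nsmul_eq_mul]
  ring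
end

section
/- Let N ≥ 3 and let P be the symmetric simple random walk on the N-cycle, i.e., the N×N matrix with P_{ij} = 1/2 if j ≡ i±1 (mod N) and P_{ij} = 0 otherwise. If M is a mean first passage time matrix of P, then Σ_{i≠j} M_{ij} = (N⁴ − N²)/6; hence the upper bound (N⁴ − N²)/6 on the minimal total mean first passage times over reversible chains on a Hamiltonian graph is attained by the cycle random walk. -/
open Matrix Finset

open Fin.NatCast Fin.CommRing

/-! Put `M' := M` with its diagonal set to zero. For the cycle walk the MFPT equations read
`M i j = 1 + (M' (i + 1) j + M' (i - 1) j) / 2`, so along a column `g d := M' (j + d) j` solves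
the discrete Poisson problem `g (d+1) = 1 + (g d + g (d+2)) / 2` with `g 0 = g N = 0`, whose only
solution is `d (N - d)`. Every row of `M` thus sums to `∑_{d < N} d (N - d) = (N³ - N) / 6`. -/

theorem eq_natCast_mul_of_second_difference_eq_zero {R : Type*} [CommRing R] {n : ℕ}
    {h : ℕ → R} (h0 : h 0 = 0) (hrec : ∀ d, d + 2 ≤ n → h (d + 2) = 2 * h (d + 1) - h d) :
    ∀ d ≤ n, h d = d * h 1 := by
  intro d
  induction d using Nat.twoStepInduction with
  | zero => simp [h0]
  | one => simp
  | more d ih ih' =>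
    intro hd
    rw [hrec d hd, ih (by omega), ih' (by omega)]
    push_cast
    ring

theorem eq_mul_sub_of_discrete_poisson {K : Type*} [Field K] [CharZero K] {n : ℕ}
    {f : ℕ → K} (h0 : f 0 = 0) (hn : f n = 0)
    (hrec : ∀ d, d + 2 ≤ n → f (d + 1) = 1 + (f d + f (d + 2)) / 2) :
    ∀ d ≤ n, f d = d * (n - d) := by
  set h : ℕ → K := fun d => f d - d * (n - d) with h_def
  have hlin : ∀ d ≤ n, h d = d * h 1 :=
    eq_natCast_mul_of_second_difference_eq_zero (by simp [h_def, h0]) fun d hd => by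
      simp only [h_def, hrec d hd]
      push_cast
      ring
  intro d hd
  suffices h d = 0 from sub_eq_zero.1 this
  rcases Nat.eq_zero_or_pos n with rfl | hpos
  · simp [h_def, Nat.le_zero.1 hd, h0]
  · have hn' : (n : K) * h 1 = 0 := by rw [← hlin n le_rfl]; simp [h_def, hn]
    have h1 : h 1 = 0 := (mul_eq_zero.1 hn').resolve_left (Nat.cast_ne_zero.2 hpos.ne')
    rw [hlin d hd, h1, mul_zero]

theorem sum_range_natCast (n : ℕ) : ∑ d ∈ range n, (d : ℝ) = n * (n - 1) / 2 := by
  induction n with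
  | zero => simp
  | succ n ih => rw [sum_range_succ, ih]; push_cast; ring

theorem sum_range_natCast_mul_sub (n : ℕ) :
    ∑ d ∈ range n, (d : ℝ) * (n - d) = ((n : ℝ) ^ 3 - n) / 6 := by
  induction n with
  | zero => simp
  | succ n ih =>
    have hsplit : ∀ d ∈ range n, (d : ℝ) * ((n + 1 : ℕ) - d) = d * (n - d) + d := fun d _ => by
      push_cast; ring
    rw [sum_range_succ, sum_congr rfl hsplit, sum_add_distrib, ih, sum_range_natCast]
    push_cast
    ring

def zeroDiag {n α : Type*} [DecidableEq n] [Zero α] (M : Matrix n n α) : Matrix n n α :=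
  fun i j => if i = j then 0 else M i j

theorem IsMFPT.eq_one_add_sum_mul_zeroDiag {N : ℕ} {P M : Matrix (Fin N) (Fin N) ℝ}
    (hM : IsMFPT P M) (i j : Fin N) : M i j = 1 + ∑ k, P i k * zeroDiag M k j := by
  rw [hM i j, sum_filter]
  congr 1
  refine sum_congr rfl fun k _ => ?_
  by_cases hk : k = j <;> simp [zeroDiag, hk]

theorem Fin.add_one_ne_sub_one {N : ℕ} [NeZero N] (hN : 3 ≤ N) (i : Fin N) : i + 1 ≠ i - 1 := by
  intro h
  have h2 : ((2 : ℕ) : Fin N) = 0 := by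
    rw [← sub_eq_zero.2 h]; push_cast; ring
  have := Nat.le_of_dvd two_pos (Fin.natCast_eq_zero.1 h2)
  omega

theorem cycle_neighbor_iff {N : ℕ} [NeZero N] (hN : 3 ≤ N) (i k : Fin N) :
    ((k : ℕ) = ((i : ℕ) + 1) % N ∨ (k : ℕ) = ((i : ℕ) + N - 1) % N) ↔ k = i + 1 ∨ k = i - 1 := by
  rw [Fin.ext_iff, Fin.ext_iff, Fin.val_add, Fin.val_sub, Fin.val_one',
    Nat.mod_eq_of_lt (by omega : 1 < N), show N - 1 + (i : ℕ) = i + N - 1 by omega]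

theorem sum_cycle_mul {N : ℕ} [NeZero N] (hN : 3 ≤ N) {P : Matrix (Fin N) (Fin N) ℝ}
    (hP : ∀ i j : Fin N, P i j =
      if (j : ℕ) = ((i : ℕ) + 1) % N ∨ (j : ℕ) = ((i : ℕ) + N - 1) % N
      then (1 : ℝ) / 2 else 0)
    (f : Fin N → ℝ) (i : Fin N) : ∑ k, P i k * f k = (f (i + 1) + f (i - 1)) / 2 := by
  have hnbrs : univ.filter (fun k => k = i + 1 ∨ k = i - 1) = {i + 1, i - 1} := by
    ext k; simp
  simp only [hP, cycle_neighbor_iff hN, ite_mul, zero_mul, ← sum_filter, hnbrs]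
  rw [sum_pair (Fin.add_one_ne_sub_one hN i)]
  ring

theorem zeroDiag_add_natCast_eq_of_cycle {N : ℕ} [NeZero N] {M : Matrix (Fin N) (Fin N) ℝ}
    (hrec : ∀ i j, M i j = 1 + (zeroDiag M (i + 1) j + zeroDiag M (i - 1) j) / 2) (j : Fin N) :
    ∀ d ≤ N, zeroDiag M (j + d) j = d * (N - d) := by
  refine eq_mul_sub_of_discrete_poisson (f := fun d => zeroDiag M (j + d) j)
    (by simp [zeroDiag]) (by simp [zeroDiag]) fun d hd => ?_
  have hoff : j + ((d + 1 : ℕ) : Fin N) ≠ j := by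
    rw [Ne, add_eq_left, Fin.natCast_eq_zero]
    exact fun hdvd => by have := Nat.le_of_dvd d.succ_pos hdvd; omega
  have hsucc : j + ((d + 1 : ℕ) : Fin N) + 1 = j + ((d + 2 : ℕ) : Fin N) := by push_cast; ring
  have hpred : j + ((d + 1 : ℕ) : Fin N) - 1 = j + (d : Fin N) := by push_cast; ring
  simp only [zeroDiag, if_neg hoff]
  rw [hrec, hsucc, hpred, add_comm (zeroDiag M _ j)]
  rfl

theorem sum_filter_ne_eq_of_cycle {N : ℕ} [NeZero N] {M : Matrix (Fin N) (Fin N) ℝ}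
    (hrec : ∀ i j, M i j = 1 + (zeroDiag M (i + 1) j + zeroDiag M (i - 1) j) / 2) (i : Fin N) :
    ∑ j ∈ univ.filter (fun j => j ≠ i), M i j = ((N : ℝ) ^ 3 - N) / 6 := by
  calc ∑ j ∈ univ.filter (fun j => j ≠ i), M i j
      = ∑ j, zeroDiag M i j := by
        rw [sum_filter]
        refine sum_congr rfl fun j _ => ?_
        rcases eq_or_ne j i with rfl | h
        · simp [zeroDiag]
        · simp [zeroDiag, h, h.symm]
    _ = ∑ c : Fin N, zeroDiag M i (i - c) :=
        (Fintype.sum_equiv (Equiv.subLeft i) _ _ fun _ => rfl).symm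
    _ = ∑ c : Fin N, ((c : ℕ) : ℝ) * (N - (c : ℕ)) := sum_congr rfl fun c _ => by
        simpa using zeroDiag_add_natCast_eq_of_cycle hrec (i - c) c c.isLt.le
    _ = ∑ d ∈ range N, (d : ℝ) * (N - d) :=
        Fin.sum_univ_eq_sum_range (fun d => (d : ℝ) * (N - d)) N
    _ = ((N : ℝ) ^ 3 - N) / 6 := sum_range_natCast_mul_sub N

theorem total_mfpt_cycle_random_walk {N : ℕ} (hN : 3 ≤ N)
    (P M : Matrix (Fin N) (Fin N) ℝ)
    (hP : ∀ i j : Fin N, P i j =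
      if (j : ℕ) = ((i : ℕ) + 1) % N ∨ (j : ℕ) = ((i : ℕ) + N - 1) % N
      then (1 : ℝ) / 2 else 0)
    (hM : IsMFPT P M) :
    ∑ i, ∑ j ∈ Finset.univ.filter (fun j => j ≠ i), M i j
      = ((N : ℝ) ^ 4 - (N : ℝ) ^ 2) / 6 := by
  have : NeZero N := ⟨by omega⟩
  have hrec : ∀ i j, M i j = 1 + (zeroDiag M (i + 1) j + zeroDiag M (i - 1) j) / 2 :=
    fun i j => by rw [hM.eq_one_add_sum_mul_zeroDiag, sum_cycle_mul hN hP]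
  rw [sum_congr rfl fun i _ => sum_filter_ne_eq_of_cycle hrec i, sum_const, card_univ,
    Fintype.card_fin, nsmul_eq_mul]
  ring
end

section
/- Price of reversibility: let N ≥ 3. Let M̂ be a mean first passage time matrix of the N×N cyclic permutation matrix (P̂_{ij} = 1 if j ≡ i+1 mod N, else 0), and let P be any symmetric irreducible row-stochastic N×N matrix with mean first passage time matrix M. Then Σ_{i≠j} M̂_{ij} < Σ_{i≠j} M_{ij}; i.e., the (non-reversible) Hamiltonian-cycle chain has strictly smaller total mean first passage times than every reversible chain, since (N³ − N²)/2 < N³ − 2N² + N for N ≥ 3. -/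
/-!
Every MFPT of the `N`-cycle is a distance `j - i` around the cycle, so each row of off-diagonal
entries sums to `N(N - 1)/2`. For a symmetric stochastic `P` and a fixed target `j`, let `h` be the
vector of hitting times of `j` (with `h j = 0`). The MFPT equations say `P h = M(·, j) - 1`;
summing them, with column sums `1`, gives Kac's formula `M j j = N`. Since `P` is doubly
stochastic, `yᵀ P y ≤ yᵀ y` for every `y`, and evaluating this at `y = h + (N - 1) eⱼ` (using
`P = Pᵀ` for the cross terms) yields `∑ᵢ hᵢ ≥ (N - 1)²`. Hence the reversible total is at least
`N(N - 1)²`, which exceeds `N²(N - 1)/2` as soon as `N ≥ 3`.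
-/

open Matrix Finset

theorem dotProduct_mulVec_le_dotProduct_self {ι : Type*} [Fintype ι] {P : Matrix ι ι ℝ}
    (hnonneg : ∀ i k, 0 ≤ P i k) (hrow : ∀ i, ∑ k, P i k = 1) (hcol : ∀ k, ∑ i, P i k = 1)
    (y : ι → ℝ) : y ⬝ᵥ (P *ᵥ y) ≤ y ⬝ᵥ y := by
  have amgm (i k : ι) : y i * (P i k * y k) ≤ (P i k * y i ^ 2 + P i k * y k ^ 2) / 2 := by
    nlinarith [mul_nonneg (hnonneg i k) (sq_nonneg (y i - y k))]
  calc y ⬝ᵥ (P *ᵥ y) = ∑ i, ∑ k, y i * (P i k * y k) := by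
        simp only [dotProduct, mulVec, mul_sum]
    _ ≤ ∑ i, ∑ k, (P i k * y i ^ 2 + P i k * y k ^ 2) / 2 := by
        gcongr with i _ k _
        exact amgm i k
    _ = (∑ i, (∑ k, P i k) * y i ^ 2 + ∑ k, (∑ i, P i k) * y k ^ 2) / 2 := by
        simp only [← sum_div, sum_add_distrib, sum_mul]
        rw [sum_comm (f := fun i k => P i k * y k ^ 2)]
    _ = y ⬝ᵥ y := by
        simp only [hrow, hcol, one_mul, dotProduct, sq]
        ring

theorem sum_mulVec_of_sum_col_eq_one {ι : Type*} [Fintype ι] {P : Matrix ι ι ℝ}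
    (hcol : ∀ k, ∑ i, P i k = 1) (v : ι → ℝ) : ∑ i, (P *ᵥ v) i = ∑ i, v i := by
  simp only [mulVec, dotProduct]
  rw [sum_comm]
  simp only [← sum_mul, hcol, one_mul]

theorem sum_sum_filter_ne_comm {ι : Type*} [Fintype ι] [DecidableEq ι] (f : ι → ι → ℝ) :
    ∑ i, ∑ j ∈ univ.filter (· ≠ i), f i j = ∑ j, ∑ i ∈ univ.filter (· ≠ j), f i j := by
  simp only [sum_filter]
  rw [sum_comm]
  simp only [ne_comm]

theorem Fin.sum_val_mul_two (N : ℕ) : (∑ k : Fin N, (k : ℝ)) * 2 = N * (N - 1) := by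
  rcases N with _ | n
  · simp
  have h := sum_range_id_mul_two (n + 1)
  rw [Nat.add_sub_cancel] at h
  rw [Fin.sum_univ_eq_sum_range (fun k => (k : ℝ)), ← Nat.cast_sum, Nat.cast_succ,
    add_sub_cancel_right]
  exact_mod_cast h

def hittingTimes {ι : Type*} [DecidableEq ι] (M : Matrix ι ι ℝ) (j : ι) : ι → ℝ :=
  fun i => if i = j then 0 else M i j

theorem sum_hittingTimes {ι : Type*} [Fintype ι] [DecidableEq ι] (M : Matrix ι ι ℝ) (j : ι) :
    ∑ i, hittingTimes M j i = ∑ i ∈ univ.filter (· ≠ j), M i j := by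
  simp only [sum_filter, hittingTimes, ite_not]

section Reversible

variable {N : ℕ} {P M : Matrix (Fin N) (Fin N) ℝ}

theorem IsMFPT.mulVec_hittingTimes (hM : IsMFPT P M) (j : Fin N) :
    P *ᵥ hittingTimes M j = fun i => M i j - 1 := by
  ext i
  simp only [hM i j, sum_filter, mulVec, dotProduct, hittingTimes, mul_ite, mul_zero, ite_not]
  ring

theorem IsMFPT.apply_self_eq_card (hcol : ∀ k, ∑ i, P i k = 1) (hM : IsMFPT P M) (j : Fin N) :
    M j j = N := by
  have hsum := sum_mulVec_of_sum_col_eq_one hcol (hittingTimes M j)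
  rw [hM.mulVec_hittingTimes, sum_hittingTimes, filter_ne', sum_erase_eq_sub (mem_univ j),
    sum_sub_distrib] at hsum
  simp only [sum_const, card_univ, Fintype.card_fin, nsmul_eq_mul, mul_one] at hsum
  linarith

theorem IsMFPT.sq_card_sub_one_le_sum_col (hP : IsRowStochastic P) (hsym : P = Pᵀ)
    (hM : IsMFPT P M) (j : Fin N) :
    ((N : ℝ) - 1) ^ 2 ≤ ∑ i ∈ univ.filter (· ≠ j), M i j := by
  have hcol (k : Fin N) : ∑ i, P i k = 1 := by
    rw [hsym]
    exact hP.2 k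
  have hPh := hM.mulVec_hittingTimes j
  have hPh_j : (P *ᵥ hittingTimes M j) j = N - 1 := by
    simp only [hPh, hM.apply_self_eq_card hcol]
  set h := hittingTimes M j with h_def
  have hh_j : h j = 0 := if_pos rfl
  have h_Ph : h ⬝ᵥ (P *ᵥ h) = h ⬝ᵥ h - ∑ i, h i := by
    rw [hPh, dotProduct, dotProduct, ← sum_sub_distrib]
    refine sum_congr rfl fun i _ => ?_
    rcases eq_or_ne i j with rfl | hi
    · simp [hh_j]
    · simp only [h_def, hittingTimes, if_neg hi]
      ring
  have h_Pe (s : ℝ) : h ⬝ᵥ (P *ᵥ Pi.single j s) = (N - 1) * s := by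
    rw [dotProduct_mulVec, dotProduct_single, hsym, vecMul_transpose, hPh_j]
  have hPe_j (s : ℝ) : (P *ᵥ Pi.single j s) j = P j j * s := by
    simp [mulVec_single]
  have key := dotProduct_mulVec_le_dotProduct_self hP.1 hP.2 hcol (h + Pi.single j ((N : ℝ) - 1))
  simp only [mulVec_add, dotProduct_add, add_dotProduct, single_dotProduct, dotProduct_single,
    h_Ph, h_Pe, hPh_j, hPe_j, Pi.add_apply, Pi.single_eq_same, hh_j] at key
  rw [← sum_hittingTimes]
  nlinarith [mul_nonneg (hP.1 j j) (sq_nonneg ((N : ℝ) - 1))]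

end Reversible

section Cycle

variable {N : ℕ} [NeZero N] {Phat Mhat : Matrix (Fin N) (Fin N) ℝ}

theorem cyclicPerm_apply
    (hPhat : ∀ i j : Fin N, Phat i j = if (j : ℕ) = ((i : ℕ) + 1) % N then 1 else 0)
    (i k : Fin N) : Phat i k = if k = i + 1 then 1 else 0 := by
  simp only [hPhat, Fin.ext_iff, Fin.val_add, Fin.val_one', Nat.add_mod_mod]

theorem IsMFPT.eq_one_add_of_cyclicPerm (hPhat : ∀ i k, Phat i k = if k = i + 1 then 1 else 0)
    (hM : IsMFPT Phat Mhat) (i j : Fin N) :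
    Mhat i j = 1 + if i + 1 = j then 0 else Mhat (i + 1) j := by
  simp only [hM i j, hPhat, ite_mul, one_mul, zero_mul, sum_ite_eq', mem_filter, mem_univ,
    true_and, ite_not]

open Fin.NatCast in
theorem IsMFPT.apply_add_natCast_of_cyclicPerm
    (hPhat : ∀ i k, Phat i k = if k = i + 1 then 1 else 0) (hM : IsMFPT Phat Mhat) (i : Fin N)
    {d : ℕ} (hd_pos : 1 ≤ d) (hd : d < N) :
    Mhat i (i + d) = d := by
  induction d, hd_pos using Nat.le_induction generalizing i with
  | base => simp [hM.eq_one_add_of_cyclicPerm hPhat]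
  | succ d hd_pos ih =>
    have hne : i + 1 ≠ i + (d + 1 : ℕ) := by
      rw [Nat.cast_succ, Ne, add_right_inj, right_eq_add, Fin.natCast_eq_zero]
      exact Nat.not_dvd_of_pos_of_lt hd_pos (by omega)
    rw [hM.eq_one_add_of_cyclicPerm hPhat, if_neg hne, Nat.cast_succ, add_comm (d : Fin N),
      ← add_assoc, ih (i + 1) (by omega)]
    push_cast
    ring

theorem IsMFPT.apply_of_cyclicPerm (hPhat : ∀ i k, Phat i k = if k = i + 1 then 1 else 0)
    (hM : IsMFPT Phat Mhat) {i j : Fin N} (hij : i ≠ j) :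
    Mhat i j = (j - i : Fin N) := by
  have hpos : 1 ≤ (j - i : Fin N).val :=
    Nat.one_le_iff_ne_zero.2 (by simpa [Fin.val_eq_zero_iff, sub_eq_zero] using hij.symm)
  have := hM.apply_add_natCast_of_cyclicPerm hPhat i hpos (j - i).isLt
  rwa [Fin.cast_val_eq_self, add_sub_cancel] at this

theorem IsMFPT.sum_row_of_cyclicPerm
    (hPhat : ∀ i k, Phat i k = if k = i + 1 then 1 else 0) (hM : IsMFPT Phat Mhat) (i : Fin N) :
    ∑ j ∈ univ.filter (· ≠ i), Mhat i j = N * (N - 1) / 2 := by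
  have hrow : ∑ j ∈ univ.filter (· ≠ i), Mhat i j = ∑ j, ((j - i : Fin N) : ℝ) := by
    rw [sum_filter]
    refine sum_congr rfl fun j _ => ?_
    by_cases hj : j = i
    · simp [hj]
    · rw [if_pos hj, hM.apply_of_cyclicPerm hPhat (Ne.symm hj)]
  rw [hrow, eq_div_iff two_ne_zero, ← Fin.sum_val_mul_two]
  congr 1
  exact Fintype.sum_equiv (Equiv.subRight i) _ _ fun _ => rfl

end Cycle

theorem price_of_reversibility_general {N : ℕ} (hN : 3 ≤ N)
    (Phat Mhat : Matrix (Fin N) (Fin N) ℝ)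
    (hPhat : ∀ i j : Fin N, Phat i j = if (j : ℕ) = ((i : ℕ) + 1) % N then 1 else 0)
    (hMhat : IsMFPT Phat Mhat)
    (P M : Matrix (Fin N) (Fin N) ℝ)
    (hP : IsRowStochastic P) (hsym : P = Pᵀ)
    (hM : IsMFPT P M) :
    ∑ i, ∑ j ∈ Finset.univ.filter (fun j => j ≠ i), Mhat i j <
      ∑ i, ∑ j ∈ Finset.univ.filter (fun j => j ≠ i), M i j := by
  have : NeZero N := ⟨by omega⟩
  have hcycle := hMhat.sum_row_of_cyclicPerm (cyclicPerm_apply hPhat)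
  have hrev := hM.sq_card_sub_one_le_sum_col hP hsym
  have hN_real : (3 : ℝ) ≤ N := by exact_mod_cast hN
  calc ∑ i, ∑ j ∈ univ.filter (· ≠ i), Mhat i j = N * (N * (N - 1) / 2) := by
        simp only [hcycle, sum_const, card_univ, Fintype.card_fin, nsmul_eq_mul]
    _ < N * (N - 1) ^ 2 := by nlinarith
    _ ≤ ∑ j, ∑ i ∈ univ.filter (· ≠ j), M i j := by
        simpa using sum_le_sum fun j (_ : j ∈ univ) => hrev j
    _ = ∑ i, ∑ j ∈ univ.filter (· ≠ i), M i j := (sum_sum_filter_ne_comm _).symm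

theorem price_of_reversibility {N : ℕ} (hN : 3 ≤ N)
    (Phat Mhat : Matrix (Fin N) (Fin N) ℝ)
    (hPhat : ∀ i j : Fin N, Phat i j = if (j : ℕ) = ((i : ℕ) + 1) % N then 1 else 0)
    (hMhat : IsMFPT Phat Mhat)
    (P M : Matrix (Fin N) (Fin N) ℝ)
    (hP : IsRowStochastic P) (hsym : P = Pᵀ) (hirr : IsIrreducibleMC P)
    (hM : IsMFPT P M) :
    ∑ i, ∑ j ∈ Finset.univ.filter (fun j => j ≠ i), Mhat i j <
      ∑ i, ∑ j ∈ Finset.univ.filter (fun j => j ≠ i), M i j :=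
  price_of_reversibility_general hN Phat Mhat hPhat hMhat P M hP hsym hM
end

section
/- Derivative of the stationary distribution: let n ≥ 1 and t₀ ∈ ℝ. Let P : ℝ → (n×n real matrices) and π : ℝ → ℝⁿ (regarded as row vectors) both be differentiable at t₀, with derivatives P′ and π′ at t₀. Assume there is a neighborhood U of t₀ such that for all t ∈ U: every row of P(t) sums to 1, the entries of π(t) sum to 1, and π(t)·P(t) = π(t). Let Π = 1·π(t₀) (the outer product of the all-ones column vector with the row vector π(t₀)), assume A = I − P(t₀) + Π is invertible, and set D = A⁻¹ − Π (the deviation matrix). Then π′ = π(t₀)·P′·D. -/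
/-!
Differentiating the identities `π P = π`, `π 1 = 1` and `P 1 = 1`, valid near `t₀`, gives
`π' (I - P) = π P'`, `π' 1 = 0` and `P' 1 = 0`. The second one says `π' Π = 0`, so
`π' A = π P'` with `A = I - P + Π`, i.e. `π' = π P' A⁻¹`; the third one says `π P' Π = 0`,
so `A⁻¹` may be replaced by the deviation matrix `D = A⁻¹ - Π`.
-/

open Matrix Filter Topology

section Calculus

variable {𝕜 : Type*} [NontriviallyNormedField 𝕜]

theorem HasDerivAt.eq_zero_of_eventuallyEq_const {f : 𝕜 → 𝕜} {f' x c : 𝕜}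
    (hf : HasDerivAt f f' x) (h : f =ᶠ[𝓝 x] fun _ => c) : f' = 0 :=
  hf.unique ((hasDerivAt_const x c).congr_of_eventuallyEq h)

theorem hasDerivAt_vecMul_apply {m n : Type*} [Fintype m] {v : 𝕜 → m → 𝕜}
    {M : 𝕜 → Matrix m n 𝕜} {v' : m → 𝕜} {M' : Matrix m n 𝕜} {x : 𝕜}
    (hv : ∀ i, HasDerivAt (fun t => v t i) (v' i) x)
    (hM : ∀ i j, HasDerivAt (fun t => M t i j) (M' i j) x) (j : n) :
    HasDerivAt (fun t => (v t ᵥ* M t) j) ((v' ᵥ* M x) j + (v x ᵥ* M') j) x := by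
  simp only [vecMul, dotProduct, ← Finset.sum_add_distrib]
  exact HasDerivAt.fun_sum fun i _ => (hv i).mul (hM i j)

end Calculus

namespace Matrix

variable {R m n : Type*}

theorem vecMul_replicateRow [CommSemiring R] [Fintype m] (v : m → R) (w : n → R) :
    v ᵥ* replicateRow m w = (∑ i, v i) • w := by
  rw [← one_vecMulVec, vecMul_vecMulVec, dotProduct_one]

theorem sum_vecMul_eq_zero [CommSemiring R] [Fintype m] [Fintype n] (v : m → R)
    {Q : Matrix m n R} (hQ : ∀ i, ∑ j, Q i j = 0) : ∑ j, (v ᵥ* Q) j = 0 := by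
  have hQ1 : Q *ᵥ 1 = 0 := funext fun i => by simpa [mulVec, dotProduct_one] using hQ i
  rw [← dotProduct_one, ← dotProduct_mulVec, hQ1, dotProduct_zero]

section Deviation

variable [Fintype n] [DecidableEq n] [CommRing R]

noncomputable def deviationMatrix (P : Matrix n n R) (π : n → R) : Matrix n n R :=
  (1 - P + replicateRow n π)⁻¹ - replicateRow n π

theorem vecMul_one_sub_add_replicateRow (P : Matrix n n R) (π : n → R) {x : n → R}
    (hx : ∑ i, x i = 0) : x ᵥ* (1 - P + replicateRow n π) = x - x ᵥ* P := by
  rw [vecMul_add, vecMul_sub, vecMul_one, vecMul_replicateRow, hx, zero_smul, add_zero]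

theorem eq_vecMul_mul_deviationMatrix {P Q : Matrix n n R} {π x : n → R}
    (hx : x = x ᵥ* P + π ᵥ* Q) (hxsum : ∑ i, x i = 0) (hQ : ∀ i, ∑ j, Q i j = 0)
    (hA : IsUnit (1 - P + replicateRow n π)) :
    x = π ᵥ* (Q * deviationMatrix P π) := by
  set A := 1 - P + replicateRow n π
  have hxA : x ᵥ* A = π ᵥ* Q := by
    rw [vecMul_one_sub_add_replicateRow P π hxsum]
    exact sub_eq_of_eq_add' hx
  have hAinv : A * A⁻¹ = 1 := mul_nonsing_inv A ((isUnit_iff_isUnit_det A).mp hA)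
  rw [← vecMul_vecMul, deviationMatrix, vecMul_sub, vecMul_replicateRow,
    sum_vecMul_eq_zero π hQ, zero_smul, sub_zero, ← hxA, vecMul_vecMul, hAinv, vecMul_one]

end Deviation

end Matrix

theorem stationary_distribution_derivative_general {n : ℕ} (t0 : ℝ)
    (P : ℝ → Matrix (Fin n) (Fin n) ℝ) (pi : ℝ → Fin n → ℝ)
    (P' : Matrix (Fin n) (Fin n) ℝ) (pi' : Fin n → ℝ)
    (hP : ∀ i j, HasDerivAt (fun t => P t i j) (P' i j) t0)
    (hpi : ∀ i, HasDerivAt (fun t => pi t i) (pi' i) t0)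
    (U : Set ℝ) (hU : U ∈ nhds t0)
    (hrow : ∀ t ∈ U, ∀ i, ∑ j, P t i j = 1)
    (hsum : ∀ t ∈ U, ∑ i, pi t i = 1)
    (hstat : ∀ t ∈ U, Matrix.vecMul (pi t) (P t) = pi t)
    (hA : IsUnit (1 - P t0 + Matrix.of fun _ j => pi t0 j))
    (D : Matrix (Fin n) (Fin n) ℝ)
    (hD : D = (1 - P t0 + Matrix.of fun _ j => pi t0 j)⁻¹
        - Matrix.of fun _ j => pi t0 j) :
    pi' = Matrix.vecMul (pi t0) (P' * D) := by
  have hrow' : ∀ i, ∑ j, P' i j = 0 := fun i =>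
    (HasDerivAt.fun_sum fun j _ => hP i j).eq_zero_of_eventuallyEq_const
      (mem_of_superset hU fun t ht => hrow t ht i)
  have hsum' : ∑ i, pi' i = 0 :=
    (HasDerivAt.fun_sum fun i _ => hpi i).eq_zero_of_eventuallyEq_const
      (mem_of_superset hU hsum)
  have hstat' : pi' = pi' ᵥ* P t0 + pi t0 ᵥ* P' := funext fun j =>
    ((hpi j).congr_of_eventuallyEq
      (mem_of_superset hU fun t ht => congrFun (hstat t ht) j)).unique
      (hasDerivAt_vecMul_apply hpi hP j)
  exact hD ▸ eq_vecMul_mul_deviationMatrix hstat' hsum' hrow' hA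

theorem stationary_distribution_derivative {n : ℕ} (hn : 1 ≤ n) (t0 : ℝ)
    (P : ℝ → Matrix (Fin n) (Fin n) ℝ) (pi : ℝ → Fin n → ℝ)
    (P' : Matrix (Fin n) (Fin n) ℝ) (pi' : Fin n → ℝ)
    (hP : ∀ i j, HasDerivAt (fun t => P t i j) (P' i j) t0)
    (hpi : ∀ i, HasDerivAt (fun t => pi t i) (pi' i) t0)
    (U : Set ℝ) (hU : U ∈ nhds t0)
    (hrow : ∀ t ∈ U, ∀ i, ∑ j, P t i j = 1)
    (hsum : ∀ t ∈ U, ∑ i, pi t i = 1)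
    (hstat : ∀ t ∈ U, Matrix.vecMul (pi t) (P t) = pi t)
    (hA : IsUnit (1 - P t0 + Matrix.of fun _ j => pi t0 j))
    (D : Matrix (Fin n) (Fin n) ℝ)
    (hD : D = (1 - P t0 + Matrix.of fun _ j => pi t0 j)⁻¹
        - Matrix.of fun _ j => pi t0 j) :
    pi' = Matrix.vecMul (pi t0) (P' * D) :=
  stationary_distribution_derivative_general t0 P pi P' pi' hP hpi U hU hrow hsum hstat hA D hD
end

section
/- Bias of the SPSA steepest-feasible-descent estimator: let n, d ≥ 1, let x ∈ ℝⁿ, let B be an n×d real matrix, and let J : ℝⁿ → ℝ be three times continuously differentiable. For η > 0 define G(η) = 2^{−d} · Σ_{Δ ∈ {−1,1}^d} [(J(x − η·BΔ) − J(x + η·BΔ))/(2η)]·BΔ ∈ ℝⁿ, i.e., the expectation over a uniformly distributed sign vector Δ ∈ {−1,1}^d of the simultaneous-perturbation estimator. Then there exist constants K ≥ 0 and η₀ > 0 such that for all 0 < η ≤ η₀: ‖G(η) − δ′(x)‖₂ ≤ K·η², where δ′(x) = −B·Bᵀ·∇J(x) is the steepest feasible descent direction; i.e., E_Δ[δ̃(x,Δ,η)]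 = δ′(x) + O(η²). -/
/-!
Since `J` is `C³`, Taylor's theorem makes the symmetric difference quotient
`(J (x + η v) - J (x - η v)) / (2 η)` equal to `J'(x) v + O(η²)`. So up to `O(η²)` the SPSA mean
is the average of `-(∇J(x) ⬝ BΔ) BΔ` over the sign cube, and this average is `-B Bᵀ ∇J(x)`
because the coordinates of a uniform sign vector are orthonormal: `E[Δ Δᵀ] = 1`.
-/

open Matrix Finset Asymptotics Filter Topology

section CentralDifference

variable {E F : Type*} [NormedAddCommGroup E] [NormedSpace ℝ E]
  [NormedAddCommGroup F] [NormedSpace ℝ F]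

theorem taylorWithinEval_three_sub_neg (f : ℝ → F) (t : ℝ) :
    taylorWithinEval f 3 Set.univ 0 t - taylorWithinEval f 3 Set.univ 0 (-t)
      = (2 * t) • deriv f 0 + (t ^ 3 / 3) • iteratedDeriv 3 f 0 := by
  simp only [taylor_within_apply, iteratedDerivWithin_univ, sum_range_succ,
    sum_range_zero, iteratedDeriv_one, Nat.factorial, sub_zero]
  module

/-- The even Taylor terms cancel in `f t - f (-t)`, so the `o(t ^ 3)` remainder of the
third-order expansion leaves an `O(t ^ 2)` error after division by `2 t`. -/
theorem centralDifference_sub_deriv_isBigO {f : ℝ → F} (hf : ContDiff ℝ 3 f) :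
    (fun t => (2 * t)⁻¹ • (f t - f (-t)) - deriv f 0) =O[𝓝[≠] 0] fun t => t ^ 2 := by
  set T := taylorWithinEval f 3 Set.univ 0
  have hpos : (fun t => f t - T t) =o[𝓝 0] fun t => t ^ 3 := by
    simpa only [sub_zero] using taylor_isLittleO_univ (n := 3) (x₀ := 0) hf
  have hneg : (fun t => f (-t) - T (-t)) =o[𝓝 0] fun t => t ^ 3 := by
    have := hpos.comp_tendsto (continuous_neg.tendsto' (0 : ℝ) 0 neg_zero)
    simpa [Function.comp_def, Odd.neg_pow (by decide : Odd 3)] using this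
  have hrem : (fun t => (2 * t)⁻¹ • ((f t - T t) - (f (-t) - T (-t)))) =O[𝓝 0]
      fun t => t ^ 2 := by
    refine ((isBigO_refl (fun t : ℝ => (2 * t)⁻¹) _).smul_isLittleO
      (hpos.sub hneg)).isBigO.trans ?_
    refine (isBigO_refl (fun t : ℝ => t ^ 2) _).const_mul_left (1 / 2) |>.congr_left fun t => ?_
    rcases eq_or_ne t 0 with rfl | ht
    · simp
    · simp only [smul_eq_mul]
      field_simp
  have hcubic : (fun t : ℝ => (t ^ 2 / 6) • iteratedDeriv 3 f 0) =O[𝓝[≠] 0] fun t => t ^ 2 :=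
    isBigO_of_le' (c := ‖iteratedDeriv 3 f 0‖ / 6) _ fun t => by
      rw [norm_smul, norm_div, Real.norm_ofNat]
      exact le_of_eq (by ring)
  refine ((hrem.mono nhdsWithin_le_nhds).add hcubic).congr' ?_ .rfl
  filter_upwards [self_mem_nhdsWithin] with t (ht : t ≠ 0)
  have h2t : (2 * t)⁻¹ * (2 * t) = 1 := inv_mul_cancel₀ (by positivity)
  have h3 : (2 * t)⁻¹ * (t ^ 3 / 3) = t ^ 2 / 6 := by field_simp; norm_num
  rw [sub_sub_sub_comm, smul_sub _ (f t - f (-t)), taylorWithinEval_three_sub_neg]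
  simp only [smul_add, smul_smul, h2t, h3, one_smul]
  abel

theorem centralDifference_sub_fderiv_isBigO {J : E → F} (hJ : ContDiff ℝ 3 J) (x v : E) :
    (fun t : ℝ => (2 * t)⁻¹ • (J (x + t • v) - J (x - t • v)) - fderiv ℝ J x v)
      =O[𝓝[≠] 0] fun t => t ^ 2 := by
  have hline : ContDiff ℝ 3 fun t : ℝ => J (x + t • v) :=
    hJ.comp (contDiff_const.add (contDiff_id.smul contDiff_const))
  have hderiv : deriv (fun t : ℝ => J (x + t • v)) 0 = fderiv ℝ J x v :=
    (hJ.differentiable (by norm_num)).differentiableAt.lineDeriv_eq_fderiv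
  simpa [hderiv, neg_smul, ← sub_eq_add_neg] using centralDifference_sub_deriv_isBigO hline

end CentralDifference

theorem LinearMap.apply_eq_dotProduct {R ι : Type*} [CommSemiring R] [Fintype ι] [DecidableEq ι]
    (L : (ι → R) →ₗ[R] R) (w : ι → R) : L w = (fun j => L (Pi.single j 1)) ⬝ᵥ w := by
  conv_lhs => rw [← (LinearEquiv.piRing R R ι R).symm_apply_apply L, LinearEquiv.piRing_symm_apply]
  simp only [LinearEquiv.piRing_apply, smul_eq_mul, dotProduct, mul_comm]

theorem Asymptotics.IsBigO.exists_forall_Ioc_norm_le {E G : Type*} [Norm E]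
    [SeminormedAddCommGroup G] {f : ℝ → E} {g : ℝ → G} {a : ℝ} (h : f =O[𝓝[>] a] g) :
    ∃ K, 0 ≤ K ∧ ∃ b, a < b ∧ ∀ y ∈ Set.Ioc a b, ‖f y‖ ≤ K * ‖g y‖ := by
  obtain ⟨K, hK, hfg⟩ := h.exists_nonneg
  obtain ⟨b, hab, hsub⟩ := mem_nhdsGT_iff_exists_Ioc_subset.1 hfg.bound
  exact ⟨K, hK, b, hab, hsub⟩

section SignVectors

variable {ι : Type*} [Fintype ι] [DecidableEq ι]

def signVec (s : ι → Bool) : ι → ℝ := fun k => if s k then 1 else -1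

omit [Fintype ι] [DecidableEq ι] in
theorem signVec_mul_self (s : ι → Bool) (k : ι) : signVec s k * signVec s k = 1 := by
  unfold signVec; split_ifs <;> norm_num

/-- Flipping the sign at `l` is a bijection of the cube changing the sign of the summand. -/
theorem sum_signVec_mul_signVec (k l : ι) :
    ∑ s : ι → Bool, signVec s k * signVec s l = if k = l then 2 ^ Fintype.card ι else 0 := by
  split_ifs with hkl
  · subst hkl
    simp [signVec_mul_self]
  · let flip : Equiv.Perm (ι → Bool) :=
      Function.Involutive.toPerm (fun s => Function.update s l (!s l)) fun s => by simp
    have hflip (s : ι → Bool) :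
        signVec (flip s) k * signVec (flip s) l = -(signVec s k * signVec s l) := by
      have hk : flip s k = s k := Function.update_of_ne hkl _ _
      have hl : flip s l = !s l := Function.update_self _ _ _
      simp only [signVec, hk, hl]
      cases s l <;> simp
    have := Equiv.sum_comp flip fun s => signVec s k * signVec s l
    simp only [hflip, sum_neg_distrib] at this
    linarith

theorem sum_dotProduct_smul_signVec (w : ι → ℝ) :
    ∑ s : ι → Bool, (signVec s ⬝ᵥ w) • signVec s = (2 ^ Fintype.card ι : ℝ) • w := by
  ext k
  simp only [Finset.sum_apply, Pi.smul_apply, smul_eq_mul, dotProduct, sum_mul]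
  rw [sum_comm]
  simp_rw [mul_right_comm _ (w _), ← sum_mul, mul_comm (signVec _ _) (signVec _ k),
    sum_signVec_mul_signVec]
  simp [mul_comm]

theorem sum_dotProduct_mulVec_smul_mulVec_signVec {m : Type*} [Fintype m]
    (B : Matrix m ι ℝ) (g : m → ℝ) :
    ∑ s : ι → Bool, (g ⬝ᵥ B *ᵥ signVec s) • B *ᵥ signVec s
      = (2 ^ Fintype.card ι : ℝ) • (B * Bᵀ) *ᵥ g := by
  simp_rw [dotProduct_mulVec, ← mulVec_transpose, dotProduct_comm _ (signVec _), ← mulVec_smul,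
    ← mulVec_sum, sum_dotProduct_smul_signVec, mulVec_smul, mulVec_mulVec]

end SignVectors

section SPSA

variable {m ι : Type*} [Fintype m] [DecidableEq m] [Fintype ι] [DecidableEq ι]

/-- The paper's `G(η)`; `s : ι → Bool` encodes the sign vector `Δ = signVec s`. -/
noncomputable def spsaMean (J : (m → ℝ) → ℝ) (x : m → ℝ) (B : Matrix m ι ℝ) (η : ℝ) : m → ℝ :=
  (2 ^ Fintype.card ι : ℝ)⁻¹ • ∑ s : ι → Bool,
    ((J (x - η • B *ᵥ signVec s) - J (x + η • B *ᵥ signVec s)) / (2 * η)) • B *ᵥ signVec s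

theorem spsaMean_sub_isBigO {J : (m → ℝ) → ℝ} (hJ : ContDiff ℝ 3 J) (x : m → ℝ)
    (B : Matrix m ι ℝ) :
    (fun η => spsaMean J x B η - -((B * Bᵀ) *ᵥ fun j => fderiv ℝ J x (Pi.single j 1)))
      =O[𝓝[≠] 0] fun η => η ^ 2 := by
  set g : m → ℝ := fun j => fderiv ℝ J x (Pi.single j 1)
  set v : (ι → Bool) → m → ℝ := fun s => B *ᵥ signVec s
  have hlinear : ∑ s, fderiv ℝ J x (v s) • v s = (2 ^ Fintype.card ι : ℝ) • (B * Bᵀ) *ᵥ g := by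
    have hgrad (w : m → ℝ) : fderiv ℝ J x w = g ⬝ᵥ w :=
      (fderiv ℝ J x : (m → ℝ) →ₗ[ℝ] ℝ).apply_eq_dotProduct w
    simp_rw [hgrad]
    exact sum_dotProduct_mulVec_smul_mulVec_signVec B g
  have hterm (s : ι → Bool) :
      (fun η => ((J (x - η • v s) - J (x + η • v s)) / (2 * η) + fderiv ℝ J x (v s)) • v s)
        =O[𝓝[≠] 0] fun η => η ^ 2 := by
    have hcoef : (fun η => (J (x - η • v s) - J (x + η • v s)) / (2 * η) + fderiv ℝ J x (v s))
        =O[𝓝[≠] 0] fun η => η ^ 2 :=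
      (centralDifference_sub_fderiv_isBigO hJ x (v s)).neg_left.congr_left fun η => by
        rw [div_eq_inv_mul, smul_eq_mul]
        ring
    exact ((ContinuousLinearMap.toSpanSingleton ℝ (v s)).isBigO_comp _ _).trans hcoef
  have hsum := (IsBigO.sum (s := univ) fun s _ => hterm s).const_smul_left
    (2 ^ Fintype.card ι : ℝ)⁻¹
  refine hsum.congr_left fun η => ?_
  have h2 : (2 ^ Fintype.card ι : ℝ)⁻¹ * 2 ^ Fintype.card ι = 1 := inv_mul_cancel₀ (by positivity)
  simp only [Pi.smul_apply, Finset.sum_apply, add_smul, sum_add_distrib, hlinear, smul_add,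
    smul_smul, h2, one_smul, spsaMean, sub_neg_eq_add, v]

end SPSA

theorem spsa_estimator_bias_general {n d : ℕ}
    (J : (Fin n → ℝ) → ℝ) (hJ : ContDiff ℝ 3 J)
    (x : Fin n → ℝ) (B : Matrix (Fin n) (Fin d) ℝ) :
    ∃ K : ℝ, 0 ≤ K ∧ ∃ η₀ : ℝ, 0 < η₀ ∧ ∀ η : ℝ, 0 < η → η ≤ η₀ →
      Real.sqrt (∑ i,
        (((2 : ℝ) ^ d)⁻¹ *
            (∑ s : Fin d → Bool,
              ((J (x - η • B.mulVec (fun k => if s k then 1 else -1))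
                  - J (x + η • B.mulVec (fun k => if s k then 1 else -1))) / (2 * η))
                * B.mulVec (fun k => if s k then 1 else -1) i)
          - (-(B * Bᵀ).mulVec (fun j => fderiv ℝ J x (Pi.single j 1)) i)) ^ 2)
        ≤ K * η ^ 2 := by
  -- `Fin n → ℝ` carries the sup norm; pass to the Euclidean norm of the statement.
  have hbias := ((EuclideanSpace.equiv (Fin n) ℝ).symm.toContinuousLinearMap.isBigO_comp _ _).trans
    ((spsaMean_sub_isBigO hJ x B).mono (nhdsGT_le_nhdsNE 0))
  obtain ⟨K, hK, η₀, hη₀, hbound⟩ := hbias.exists_forall_Ioc_norm_le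
  refine ⟨K, hK, η₀, hη₀, fun η hη hle => ?_⟩
  have := hbound η ⟨hη, hle⟩
  rw [EuclideanSpace.norm_eq] at this
  unfold spsaMean signVec at this
  simpa [mul_sum] using this

theorem spsa_estimator_bias {n d : ℕ} (hn : 1 ≤ n) (hd : 1 ≤ d)
    (J : (Fin n → ℝ) → ℝ) (hJ : ContDiff ℝ 3 J)
    (x : Fin n → ℝ) (B : Matrix (Fin n) (Fin d) ℝ) :
    ∃ K : ℝ, 0 ≤ K ∧ ∃ η₀ : ℝ, 0 < η₀ ∧ ∀ η : ℝ, 0 < η → η ≤ η₀ →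
      Real.sqrt (∑ i,
        (((2 : ℝ) ^ d)⁻¹ *
            (∑ s : Fin d → Bool,
              ((J (x - η • B.mulVec (fun k => if s k then 1 else -1))
                  - J (x + η • B.mulVec (fun k => if s k then 1 else -1))) / (2 * η))
                * B.mulVec (fun k => if s k then 1 else -1) i)
          - (-(B * Bᵀ).mulVec (fun j => fderiv ℝ J x (Pi.single j 1)) i)) ^ 2)
        ≤ K * η ^ 2 :=
  spsa_estimator_bias_general J hJ x B
end

section
/- Trace identity for doubly stochastic chains: let N ≥ 2 and let P be an irreducible N×N doubly stochastic matrix (nonnegative entries, every row and every column sums to 1). Let Π be the N×N matrix with all entries equal to 1/N, assume I − P + Π is invertible, and set D = (I − P + Π)⁻¹ − Π (the deviation matrix). If M is a mean first passage time matrix of P, then Σ_{i≠j} M_{ij} = N²·Tr(D); equivalently, the total sum of mean first passage times equals N² times the trace of the deviation matrix. -/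
open Matrix Finset

/-!
Write the first passage equations as `M = J + P (M - diag M)`, with `J` the all-ones matrix.
Multiplying on the left by `Π`, which `P` fixes because its columns sum to one, gives Kac's
formula `M j j = N`. Multiplying instead by the fundamental matrix `Z = (1 - P + Π)⁻¹`, for which
`Z Π = Π` and `Z P = Z + Π - 1`, gives `M = N (1 - Z) + Π M`, whose diagonal says that the
`j`-th column of `M` sums to `N² Z j j`. Summing over `j` and removing the diagonal leaves
`N² (trace Z - 1) = N² trace (Z - Π)`.
-/

variable {ι : Type*} [Fintype ι]

/-- The ergodic projector `Π` of a doubly stochastic matrix. -/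
noncomputable def uniformProj (ι : Type*) [Fintype ι] : Matrix ι ι ℝ :=
  of fun _ _ => (Fintype.card ι : ℝ)⁻¹

theorem sum_sum_filter_ne_eq_sub_trace {α : Type*} [AddCommGroup α] [DecidableEq ι]
    (M : Matrix ι ι α) :
    ∑ i, ∑ j ∈ univ.filter (fun j => j ≠ i), M i j = ∑ i, ∑ j, M i j - trace M := by
  simp only [filter_ne', sum_erase_eq_sub (mem_univ _), sum_sub_distrib, trace, diag_apply]

section UniformProj

variable {P : Matrix ι ι ℝ}

theorem uniformProj_mul_of_sum_col (hcol : ∀ j, ∑ i, P i j = 1) :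
    uniformProj ι * P = uniformProj ι := by
  ext i j
  simp [uniformProj, mul_apply, ← mul_sum, hcol]

theorem mul_uniformProj_of_sum_row (hrow : ∀ i, ∑ j, P i j = 1) :
    P * uniformProj ι = uniformProj ι := by
  ext i j
  simp [uniformProj, mul_apply, ← sum_mul, hrow]

variable [Nonempty ι]

theorem sum_uniformProj_row (i : ι) : ∑ j, uniformProj ι i j = 1 := by
  simp [uniformProj]

theorem uniformProj_mul_self : uniformProj ι * uniformProj ι = uniformProj ι :=
  mul_uniformProj_of_sum_row sum_uniformProj_row

theorem card_smul_uniformProj :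
    (Fintype.card ι : ℝ) • uniformProj ι = of fun _ _ => 1 := by
  ext i j
  simp [uniformProj]

theorem trace_uniformProj : trace (uniformProj ι) = 1 := by
  simp [trace, uniformProj]

end UniformProj

section Fundamental

variable [DecidableEq ι] [Nonempty ι] {P Z : Matrix ι ι ℝ}

theorem fundamental_mul_uniformProj (hrow : ∀ i, ∑ j, P i j = 1)
    (hZ : Z * (1 - P + uniformProj ι) = 1) : Z * uniformProj ι = uniformProj ι := by
  have hA : (1 - P + uniformProj ι) * uniformProj ι = uniformProj ι := by
    rw [add_mul, sub_mul, one_mul, mul_uniformProj_of_sum_row hrow, uniformProj_mul_self]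
    abel
  rw [← hA, ← mul_assoc, hZ, one_mul, hA]

theorem fundamental_mul_eq (hrow : ∀ i, ∑ j, P i j = 1)
    (hZ : Z * (1 - P + uniformProj ι) = 1) : Z * P = Z + uniformProj ι - 1 := by
  rw [← hZ, mul_add, mul_sub, mul_one, fundamental_mul_uniformProj hrow hZ]
  abel

end Fundamental

theorem IsMFPT.eq_add_mul {N : ℕ} {P M : Matrix (Fin N) (Fin N) ℝ} (hM : IsMFPT P M) :
    M = (of fun _ _ => 1) + P * (M - diagonal M.diag) := by
  ext i j
  rw [hM i j, filter_ne', sum_erase_eq_sub (mem_univ j)]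
  simp [mul_apply, mul_sub, diagonal_apply]

section FirstPassage

variable [DecidableEq ι] [Nonempty ι] {P M Z : Matrix ι ι ℝ}

theorem diag_eq_card_of_eq_add_mul (hcol : ∀ j, ∑ i, P i j = 1)
    (hM : M = (of fun _ _ => 1) + P * (M - diagonal M.diag)) (j : ι) :
    M j j = Fintype.card ι := by
  have hdiag : uniformProj ι * diagonal M.diag = of fun _ _ => 1 := by
    have h := congrArg (uniformProj ι * ·) hM
    simp only [mul_add, ← mul_assoc, uniformProj_mul_of_sum_col hcol, mul_sub,
      ← card_smul_uniformProj, mul_smul_comm, uniformProj_mul_self] at h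
    rw [← card_smul_uniformProj]
    linear_combination (norm := module) h
  have h := congrFun (congrFun hdiag j) j
  simp only [uniformProj, mul_diagonal, of_apply, diag_apply] at h
  exact ((inv_mul_eq_one₀ (Nat.cast_ne_zero.mpr Fintype.card_ne_zero)).mp h).symm

theorem eq_card_smul_add_of_eq_add_mul (hrow : ∀ i, ∑ j, P i j = 1)
    (hcol : ∀ j, ∑ i, P i j = 1) (hZ : Z * (1 - P + uniformProj ι) = 1)
    (hM : M = (of fun _ _ => 1) + P * (M - diagonal M.diag)) :
    M = (Fintype.card ι : ℝ) • (1 - Z) + uniformProj ι * M := by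
  have hdiag : diagonal M.diag = (Fintype.card ι : ℝ) • 1 := by
    rw [smul_one_eq_diagonal]
    exact congrArg diagonal (funext fun j => diag_eq_card_of_eq_add_mul hcol hM j)
  have hAM : (1 - P + uniformProj ι) * M
      = (Fintype.card ι : ℝ) • (uniformProj ι - P) + uniformProj ι * M := by
    rw [add_mul, sub_mul, one_mul]
    nth_rewrite 1 [hM]
    rw [hdiag, ← card_smul_uniformProj, mul_sub, mul_smul_comm, mul_one]
    module
  calc M = Z * ((1 - P + uniformProj ι) * M) := by rw [← mul_assoc, hZ, one_mul]
    _ = (Fintype.card ι : ℝ) • (Z * uniformProj ι - Z * P) + Z * uniformProj ι * M := by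
      rw [hAM, mul_add, mul_smul_comm, mul_sub, mul_assoc]
    _ = (Fintype.card ι : ℝ) • (1 - Z) + uniformProj ι * M := by
      rw [fundamental_mul_eq hrow hZ, fundamental_mul_uniformProj hrow hZ]
      module

theorem sum_col_eq_of_eq_add_mul (hrow : ∀ i, ∑ j, P i j = 1)
    (hcol : ∀ j, ∑ i, P i j = 1) (hZ : Z * (1 - P + uniformProj ι) = 1)
    (hM : M = (of fun _ _ => 1) + P * (M - diagonal M.diag)) (j : ι) :
    ∑ i, M i j = (Fintype.card ι : ℝ) ^ 2 * Z j j := by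
  have hjj := congrFun (congrFun (eq_card_smul_add_of_eq_add_mul hrow hcol hZ hM) j) j
  rw [diag_eq_card_of_eq_add_mul hcol hM] at hjj
  simp only [Matrix.add_apply, Matrix.smul_apply, Matrix.sub_apply, one_apply_eq, uniformProj,
    mul_apply, of_apply, ← mul_sum, smul_eq_mul] at hjj
  have hn : (Fintype.card ι : ℝ) ≠ 0 := Nat.cast_ne_zero.mpr Fintype.card_ne_zero
  field_simp at hjj
  linear_combination -hjj

end FirstPassage

theorem total_mfpt_eq_trace_deviation_general {N : ℕ} (hN : 2 ≤ N)
    (P : Matrix (Fin N) (Fin N) ℝ)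
    (hrow : ∀ i, ∑ j, P i j = 1)
    (hcol : ∀ j, ∑ i, P i j = 1)
    (hinv : IsUnit (1 - P + Matrix.of fun _ _ => (N : ℝ)⁻¹))
    (D : Matrix (Fin N) (Fin N) ℝ)
    (hD : D = (1 - P + Matrix.of fun _ _ => (N : ℝ)⁻¹)⁻¹
        - Matrix.of fun _ _ => (N : ℝ)⁻¹)
    (M : Matrix (Fin N) (Fin N) ℝ) (hM : IsMFPT P M) :
    ∑ i, ∑ j ∈ Finset.univ.filter (fun j => j ≠ i), M i j
      = (N : ℝ) ^ 2 * Matrix.trace D := by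
  have : Nonempty (Fin N) := ⟨⟨0, by omega⟩⟩
  have hproj : (of fun _ _ => (N : ℝ)⁻¹ : Matrix (Fin N) (Fin N) ℝ) = uniformProj (Fin N) := by
    simp [uniformProj]
  rw [hproj] at hinv hD
  set Z := (1 - P + uniformProj (Fin N))⁻¹
  have hZ : Z * (1 - P + uniformProj (Fin N)) = 1 :=
    nonsing_inv_mul _ ((isUnit_iff_isUnit_det _).mp hinv)
  have hMeq := hM.eq_add_mul
  have hcolsum := sum_col_eq_of_eq_add_mul hrow hcol hZ hMeq
  have hdiag := diag_eq_card_of_eq_add_mul hcol hMeq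
  simp only [Fintype.card_fin] at hcolsum hdiag
  rw [sum_sum_filter_ne_eq_sub_trace, show ∑ i, ∑ j, M i j = ∑ j, ∑ i, M i j from sum_comm,
    hD, trace_sub, trace_uniformProj]
  simp only [trace, diag_apply, hcolsum, hdiag, ← mul_sum, sum_const, card_univ,
    Fintype.card_fin, nsmul_eq_mul]
  ring

theorem total_mfpt_eq_trace_deviation {N : ℕ} (hN : 2 ≤ N)
    (P : Matrix (Fin N) (Fin N) ℝ)
    (hnn : ∀ i j, 0 ≤ P i j)
    (hrow : ∀ i, ∑ j, P i j = 1)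
    (hcol : ∀ j, ∑ i, P i j = 1)
    (hirr : IsIrreducibleMC P)
    (hinv : IsUnit (1 - P + Matrix.of fun _ _ => (N : ℝ)⁻¹))
    (D : Matrix (Fin N) (Fin N) ℝ)
    (hD : D = (1 - P + Matrix.of fun _ _ => (N : ℝ)⁻¹)⁻¹
        - Matrix.of fun _ _ => (N : ℝ)⁻¹)
    (M : Matrix (Fin N) (Fin N) ℝ) (hM : IsMFPT P M) :
    ∑ i, ∑ j ∈ Finset.univ.filter (fun j => j ≠ i), M i j
      = (N : ℝ) ^ 2 * Matrix.trace D :=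
  total_mfpt_eq_trace_deviation_general hN P hrow hcol hinv D hD M hM
end
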